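/- arXiv:1408.2814 — 8 statements merged into one kernel-verified Lean document; each statement's English description precedes it below -/
import Mathlib

section
/- Let p ∈ ℤ and q ∈ ℕ* be relatively prime, γ = 2πp/q, J_{p,q} = diag(e^{i(j-1)γ}) and K_q the cyclic shift matrix. There exists a unitary matrix V ∈ M_q(ℂ) such that V* K_q* V = J_{p,q}, V* J_{p,q} V = (-1)^p e^{-iγ/2} J_{p,q}* K_q, and V* ((-1)^p e^{-iγ/2} J_{p,q}* K_q) V = K_q*. -/
/-!
With `ζ = e^{iγ/2}` (so `ζ²` is a primitive `q`-th root of unity and `ζ^q = (-1)^p`), take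
`V_{jk} = q^{-1/2} ζ^{k(q-2j-k)}`, a discrete Fourier matrix twisted by a quadratic chirp.
Its rows are orthonormal because `V_{jm} conj(V_{km}) = q⁻¹ (ζ^{2(k-j)})^m` and the powers of a
nontrivial `q`-th root of unity sum to zero. The exponent `k(q-2j-k)` is `q`-periodic in `j` and
`k` modulo `2q`, so the wrap-around of the cyclic shift costs nothing, and each of the three
intertwining relations `M V = V N` reduces entrywise to an identity between quadratic exponents.
-/

noncomputable section

open Matrix Complex

/-- `J_{p,q}` : the `q × q` diagonal matrix with diagonal entries `e^{i(j-1)γ}`, `j = 1,…,q`,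
where `γ = 2πp/q`. -/
def Jmat (p : ℤ) (q : ℕ) : Matrix (Fin q) (Fin q) ℂ :=
  Matrix.diagonal fun j => Complex.exp (Complex.I * ((j : ℕ) : ℂ) *
    ((2 * Real.pi * (p : ℝ) / (q : ℝ) : ℝ) : ℂ))

/-- `K_q` : the `q × q` cyclic shift matrix, `(K_q)_{jk} = 1` if `k ≡ j+1 [q]`, `0` otherwise. -/
def Kmat (q : ℕ) : Matrix (Fin q) (Fin q) ℂ :=
  Matrix.of fun j k => if ((j : ℕ) + 1) % q = (k : ℕ) then 1 else 0

lemma mul_mul_eq_of_mul_eq_one_of_mul_eq_mul {M : Type*} [Monoid M] {w v a b : M}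
    (hwv : w * v = 1) (h : a * v = v * b) : w * a * v = b := by
  rw [mul_assoc, h, ← mul_assoc, hwv, one_mul]

lemma zpow_eq_zpow_of_modEq {G₀ : Type*} [GroupWithZero G₀] {ζ : G₀} {n : ℕ} (hζ : ζ ^ n = 1)
    {x y : ℤ} (h : x ≡ y [ZMOD n]) : ζ ^ x = ζ ^ y := by
  rcases eq_or_ne ζ 0 with rfl | hζ0
  · obtain rfl : n = 0 := zero_pow_eq_one₀.mp hζ
    rw [Int.ModEq, Nat.cast_zero, Int.emod_zero, Int.emod_zero] at h
    rw [h]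
  · obtain ⟨t, ht⟩ := Int.modEq_iff_dvd.mp h
    rw [sub_eq_iff_eq_add'.mp ht, zpow_add₀ hζ0, _root_.zpow_mul, zpow_natCast, hζ,
      _root_.one_zpow, mul_one]

lemma sq_pow_eq_zpow {G₀ : Type*} [GroupWithZero G₀] (ζ : G₀) (n : ℕ) :
    (ζ ^ 2) ^ n = ζ ^ (2 * (n : ℤ)) := by
  rw [← pow_mul, ← zpow_natCast]
  push_cast
  rfl

lemma sq_inv_pow_eq_zpow {G₀ : Type*} [GroupWithZero G₀] (ζ : G₀) (n : ℕ) :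
    ((ζ ^ 2)⁻¹) ^ n = ζ ^ (-(2 * (n : ℤ))) := by
  rw [inv_pow, sq_pow_eq_zpow, _root_.zpow_neg]

lemma star_zpow_of_norm_eq_one {ζ : ℂ} (hζ : ‖ζ‖ = 1) (n : ℤ) : star (ζ ^ n) = ζ ^ (-n) := by
  rw [star_zpow₀, Complex.star_def, ← inv_eq_conj hζ, _root_.inv_zpow']

lemma IsPrimitiveRoot.geom_sum_zpow_eq_zero {K : Type*} [Field K] {ω : K} {q : ℕ}
    (hω : IsPrimitiveRoot ω q) {d : ℤ} (hd : ¬ (q : ℤ) ∣ d) :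
    ∑ m ∈ Finset.range q, (ω ^ d) ^ m = 0 := by
  have hne : ω ^ d ≠ 1 := fun h => hd ((hω.zpow_eq_one_iff_dvd d).mp h)
  rw [geom_sum_eq hne, ← zpow_natCast, ← _root_.zpow_mul, mul_comm, _root_.zpow_mul,
    zpow_natCast, hω.pow_eq_one, _root_.one_zpow, sub_self, zero_div]

namespace Fin

lemma intCast_val_dvd_sub_iff {q : ℕ} (j k : Fin q) :
    (q : ℤ) ∣ ((k : ℕ) : ℤ) - ((j : ℕ) : ℤ) ↔ j = k := by
  refine ⟨fun h => ?_, fun h => by simp [h]⟩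
  have hmod : ((j : ℕ) : ℤ) % q = ((k : ℕ) : ℤ) % q := Int.ModEq.eq (Int.modEq_iff_dvd.mpr h)
  rw [Int.emod_eq_of_lt (by positivity) (by exact_mod_cast j.isLt),
    Int.emod_eq_of_lt (by positivity) (by exact_mod_cast k.isLt)] at hmod
  exact Fin.ext (by exact_mod_cast hmod)

variable {q : ℕ} [NeZero q]

lemma intCast_val_add_one_modEq (j : Fin q) :
    (((j + 1 : Fin q) : ℕ) : ℤ) ≡ (j : ℕ) + 1 [ZMOD q] := by
  rw [Fin.val_add, Fin.val_one']
  simp [Int.ModEq, Int.emod_emod_of_dvd]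

lemma intCast_val_sub_one_modEq (j : Fin q) :
    (((j - 1 : Fin q) : ℕ) : ℤ) ≡ (j : ℕ) - 1 [ZMOD q] := by
  have h := intCast_val_add_one_modEq (j - 1)
  rw [sub_add_cancel] at h
  exact Int.ModEq.add_right_cancel' 1 (h.symm.trans (by rw [sub_add_cancel]))

end Fin

section Kmat

variable {q : ℕ} [NeZero q]

lemma Kmat_eq_toMatrix : Kmat q = (Equiv.addRight (1 : Fin q)).toPEquiv.toMatrix := by
  ext j k
  simp [Kmat, PEquiv.toMatrix_apply, Fin.ext_iff, Fin.val_add, eq_comm]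

lemma Kmat_conjTranspose : (Kmat q)ᴴ = (Equiv.subRight (1 : Fin q)).toPEquiv.toMatrix := by
  ext j k
  simp only [conjTranspose_apply, Kmat_eq_toMatrix, PEquiv.toMatrix_apply, Equiv.toPEquiv_apply,
    Option.mem_def, Option.some.injEq, Equiv.coe_addRight, Equiv.subRight_apply]
  by_cases h : k + 1 = j
  · subst h
    simp
  · have h' : j - 1 ≠ k := fun h' => h (by rw [← h', sub_add_cancel])
    simp [h, h']

lemma Kmat_mul_apply (M : Matrix (Fin q) (Fin q) ℂ) (j k : Fin q) :
    (Kmat q * M) j k = M (j + 1) k := by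
  rw [Kmat_eq_toMatrix, PEquiv.toMatrix_toPEquiv_mul]
  simp

lemma mul_Kmat_apply (M : Matrix (Fin q) (Fin q) ℂ) (j k : Fin q) :
    (M * Kmat q) j k = M j (k - 1) := by
  rw [Kmat_eq_toMatrix, PEquiv.mul_toMatrix_toPEquiv, sub_eq_add_neg]
  simp

lemma conjTranspose_Kmat_mul_apply (M : Matrix (Fin q) (Fin q) ℂ) (j k : Fin q) :
    ((Kmat q)ᴴ * M) j k = M (j - 1) k := by
  rw [Kmat_conjTranspose, PEquiv.toMatrix_toPEquiv_mul]
  simp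

lemma mul_conjTranspose_Kmat_apply (M : Matrix (Fin q) (Fin q) ℂ) (j k : Fin q) :
    (M * (Kmat q)ᴴ) j k = M j (k + 1) := by
  rw [Kmat_conjTranspose, PEquiv.mul_toMatrix_toPEquiv]
  simp

end Kmat

def clockMatrix (q : ℕ) (ω : ℂ) : Matrix (Fin q) (Fin q) ℂ :=
  diagonal fun j => ω ^ (j : ℕ)

lemma clockMatrix_conjTranspose (q : ℕ) (ω : ℂ) :
    (clockMatrix q ω)ᴴ = clockMatrix q (star ω) := by
  simp [clockMatrix, diagonal_conjTranspose, Pi.star_def]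

def chirp (q : ℕ) (ζ : ℂ) (a b : ℤ) : ℂ := ζ ^ (b * (q - 2 * a - b))

def chirpMatrix (q : ℕ) (ζ : ℂ) : Matrix (Fin q) (Fin q) ℂ :=
  of fun j k => (Real.sqrt q : ℂ)⁻¹ * chirp q ζ (j : ℕ) (k : ℕ)

section chirp

variable {q : ℕ} {ζ : ℂ}

lemma chirp_congr_left (hζ : ζ ^ (2 * q) = 1) {a a' : ℤ} (h : a ≡ a' [ZMOD q]) (b : ℤ) :
    chirp q ζ a b = chirp q ζ a' b := by
  obtain ⟨t, ht⟩ := Int.modEq_iff_dvd.mp h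
  refine zpow_eq_zpow_of_modEq hζ (Int.modEq_iff_dvd.mpr ⟨-(b * t), ?_⟩)
  push_cast
  linear_combination (-2 * b) * ht

lemma chirp_congr_right (hζ : ζ ^ (2 * q) = 1) (a : ℤ) {b b' : ℤ} (h : b ≡ b' [ZMOD q]) :
    chirp q ζ a b = chirp q ζ a b' := by
  obtain ⟨t, ht⟩ := Int.modEq_iff_dvd.mp h
  -- shifting `b` by `qt` changes the exponent by `q²t(1 - t) - 2qt(a + b)`, and `t(t - 1)` is even
  obtain ⟨u, hu⟩ := Int.even_mul_succ_self (t - 1)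
  refine zpow_eq_zpow_of_modEq hζ (Int.modEq_iff_dvd.mpr ⟨-(t * (a + b)) - q * u, ?_⟩)
  push_cast
  rw [sub_eq_iff_eq_add.mp ht]
  linear_combination (-(q : ℤ) ^ 2) * hu

lemma chirp_sub_one_left (hζ0 : ζ ≠ 0) (a b : ℤ) :
    chirp q ζ (a - 1) b = chirp q ζ a b * ζ ^ (2 * b) := by
  simp only [chirp, ← zpow_add₀ hζ0]
  congr 1
  ring

lemma zpow_two_mul_chirp (hζ0 : ζ ≠ 0) (a b : ℤ) :
    ζ ^ (2 * a) * chirp q ζ a b =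
      ζ ^ ((q : ℤ) - 1) * (chirp q ζ a (b - 1) * ζ ^ (-(2 * (b - 1)))) := by
  simp only [chirp, ← zpow_add₀ hζ0]
  congr 1
  ring

lemma chirp_add_one_right (hζ0 : ζ ≠ 0) (a b : ℤ) :
    chirp q ζ a (b + 1) = ζ ^ ((q : ℤ) - 1) * (ζ ^ (-(2 * a)) * chirp q ζ (a + 1) b) := by
  simp only [chirp, ← zpow_add₀ hζ0]
  congr 1
  ring

lemma chirp_mul_star_chirp (hζ : ‖ζ‖ = 1) (a b : ℤ) (m : ℕ) :
    chirp q ζ a m * star (chirp q ζ b m) = ((ζ ^ 2) ^ (b - a)) ^ m := by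
  have hζ0 : ζ ≠ 0 := norm_ne_zero_iff.mp (by rw [hζ]; exact one_ne_zero)
  rw [chirp, chirp, star_zpow_of_norm_eq_one hζ, ← zpow_add₀ hζ0, ← zpow_natCast (_ ^ _),
    ← zpow_natCast ζ 2, ← _root_.zpow_mul, ← _root_.zpow_mul]
  congr 1
  push_cast
  ring

variable [NeZero q]

lemma chirpMatrix_mul_conjTranspose (hζ : IsPrimitiveRoot (ζ ^ 2) q) :
    chirpMatrix q ζ * (chirpMatrix q ζ)ᴴ = 1 := by
  have hnorm : ‖ζ‖ = 1 := by
    have h := hζ.norm'_eq_one (NeZero.ne q)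
    rwa [norm_pow, pow_eq_one_iff_of_nonneg (norm_nonneg ζ) (two_ne_zero (α := ℕ))] at h
  have hq : ((Real.sqrt q : ℂ)⁻¹) ^ 2 * q = 1 := by
    rw [inv_pow, ← ofReal_pow, Real.sq_sqrt (Nat.cast_nonneg q), ofReal_natCast,
      inv_mul_cancel₀ (by exact_mod_cast NeZero.ne q)]
  have hs : star ((Real.sqrt q : ℂ)⁻¹) = (Real.sqrt q : ℂ)⁻¹ := by
    rw [← ofReal_inv]
    exact conj_ofReal _
  ext j k
  have hterm : ∀ m : Fin q, chirpMatrix q ζ j m * (chirpMatrix q ζ)ᴴ m k =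
      ((Real.sqrt q : ℂ)⁻¹) ^ 2 * ((ζ ^ 2) ^ (((k : ℕ) : ℤ) - (j : ℕ))) ^ (m : ℕ) := by
    intro m
    rw [conjTranspose_apply, chirpMatrix, of_apply, of_apply, star_mul', hs,
      ← chirp_mul_star_chirp hnorm]
    ring
  rw [mul_apply, Finset.sum_congr rfl fun m _ => hterm m, ← Finset.mul_sum,
    Fin.sum_univ_eq_sum_range (fun m => ((ζ ^ 2) ^ (((k : ℕ) : ℤ) - (j : ℕ))) ^ m) q]
  rcases eq_or_ne j k with rfl | hjk
  · simp only [sub_self, zpow_zero, one_pow, Finset.sum_const, Finset.card_range, nsmul_eq_mul,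
      mul_one, one_apply_eq]
    exact hq
  · rw [hζ.geom_sum_zpow_eq_zero ((Fin.intCast_val_dvd_sub_iff j k).not.mpr hjk), mul_zero,
      one_apply_ne hjk]

lemma ne_zero_of_pow_two_mul_eq_one (hζ : ζ ^ (2 * q) = 1) : ζ ≠ 0 :=
  (IsUnit.of_pow_eq_one hζ (mul_ne_zero two_ne_zero (NeZero.ne q))).ne_zero

lemma conjTranspose_Kmat_mul_chirpMatrix (hζ : ζ ^ (2 * q) = 1) :
    (Kmat q)ᴴ * chirpMatrix q ζ = chirpMatrix q ζ * clockMatrix q (ζ ^ 2) := by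
  ext j k
  rw [conjTranspose_Kmat_mul_apply, clockMatrix, mul_diagonal]
  simp only [chirpMatrix, of_apply]
  rw [chirp_congr_left hζ (Fin.intCast_val_sub_one_modEq j),
    chirp_sub_one_left (ne_zero_of_pow_two_mul_eq_one hζ), sq_pow_eq_zpow, mul_assoc]

lemma clockMatrix_mul_chirpMatrix (hζ : ζ ^ (2 * q) = 1) :
    clockMatrix q (ζ ^ 2) * chirpMatrix q ζ =
      chirpMatrix q ζ * (ζ ^ ((q : ℤ) - 1) • (clockMatrix q (ζ ^ 2)⁻¹ * Kmat q)) := by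
  ext j k
  rw [Matrix.mul_smul, Matrix.smul_apply, ← Matrix.mul_assoc, mul_Kmat_apply]
  simp only [clockMatrix, diagonal_mul, mul_diagonal, chirpMatrix, of_apply]
  have hk := Fin.intCast_val_sub_one_modEq k
  have hclock : ((ζ ^ 2)⁻¹) ^ ((k - 1 : Fin q) : ℕ) = ζ ^ (-(2 * (((k : ℕ) : ℤ) - 1))) := by
    rw [sq_inv_pow_eq_zpow]
    exact zpow_eq_zpow_of_modEq hζ (by push_cast; exact (hk.mul_left' (c := 2)).neg)
  rw [chirp_congr_right hζ _ hk, sq_pow_eq_zpow, hclock, smul_eq_mul, mul_left_comm,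
    zpow_two_mul_chirp (ne_zero_of_pow_two_mul_eq_one hζ)]
  ring

lemma smul_clockMatrix_inv_mul_Kmat_mul_chirpMatrix (hζ : ζ ^ (2 * q) = 1) :
    (ζ ^ ((q : ℤ) - 1) • (clockMatrix q (ζ ^ 2)⁻¹ * Kmat q)) * chirpMatrix q ζ =
      chirpMatrix q ζ * (Kmat q)ᴴ := by
  ext j k
  rw [Matrix.smul_mul, Matrix.smul_apply, Matrix.mul_assoc, clockMatrix, diagonal_mul,
    Kmat_mul_apply, mul_conjTranspose_Kmat_apply]
  simp only [chirpMatrix, of_apply]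
  rw [chirp_congr_left hζ (Fin.intCast_val_add_one_modEq j),
    chirp_congr_right hζ _ (Fin.intCast_val_add_one_modEq k), sq_inv_pow_eq_zpow, smul_eq_mul,
    chirp_add_one_right (ne_zero_of_pow_two_mul_eq_one hζ)]
  ring

end chirp

def halfPhase (p : ℤ) (q : ℕ) : ℂ := exp (I * ((2 * Real.pi * (p : ℝ) / (q : ℝ) / 2 : ℝ) : ℂ))

lemma isPrimitiveRoot_halfPhase_sq {p : ℤ} {q : ℕ} (hq : q ≠ 0) (hpq : Int.gcd p (q : ℤ) = 1) :
    IsPrimitiveRoot (halfPhase p q ^ 2) q := by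
  convert isPrimitiveRoot_exp_of_isCoprime p q hq (Int.isCoprime_iff_gcd_eq_one.mpr hpq) using 1
  rw [halfPhase, ← exp_nat_mul]
  congr 1
  push_cast
  ring

lemma Jmat_eq_clockMatrix (p : ℤ) (q : ℕ) : Jmat p q = clockMatrix q (halfPhase p q ^ 2) := by
  rw [Jmat, clockMatrix]
  congr 1
  funext j
  rw [halfPhase, ← pow_mul, ← exp_nat_mul]
  congr 1
  push_cast
  ring

lemma neg_one_zpow_mul_exp_eq_halfPhase_zpow (p : ℤ) {q : ℕ} (hq : q ≠ 0) :
    (-1 : ℂ) ^ p * exp (-I * ((2 * Real.pi * (p : ℝ) / (q : ℝ) / 2 : ℝ) : ℂ)) =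
      halfPhase p q ^ ((q : ℤ) - 1) := by
  have hq0 : (q : ℂ) ≠ 0 := Nat.cast_ne_zero.mpr hq
  rw [halfPhase, zpow_sub₀ (exp_ne_zero _), zpow_one, zpow_natCast, ← exp_nat_mul, ← exp_sub,
    ← exp_pi_mul_I, ← exp_int_mul, ← exp_add]
  congr 1
  push_cast
  field_simp
  ring

theorem stmt_1 (p : ℤ) (q : ℕ) (hq : 0 < q) (hpq : Int.gcd p (q : ℤ) = 1) :
    ∃ V : Matrix (Fin q) (Fin q) ℂ,
      Vᴴ * V = 1 ∧ V * Vᴴ = 1 ∧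
      Vᴴ * (Kmat q)ᴴ * V = Jmat p q ∧
      Vᴴ * Jmat p q * V =
        (((-1 : ℂ) ^ p * Complex.exp (-(Complex.I) *
          ((2 * Real.pi * (p : ℝ) / (q : ℝ) / 2 : ℝ) : ℂ))) • ((Jmat p q)ᴴ * Kmat q)) ∧
      Vᴴ * (((-1 : ℂ) ^ p * Complex.exp (-(Complex.I) *
          ((2 * Real.pi * (p : ℝ) / (q : ℝ) / 2 : ℝ) : ℂ))) • ((Jmat p q)ᴴ * Kmat q)) * V =
        (Kmat q)ᴴ := by
  have : NeZero q := ⟨hq.ne'⟩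
  have hprim := isPrimitiveRoot_halfPhase_sq hq.ne' hpq
  have hζ : halfPhase p q ^ (2 * q) = 1 := by rw [pow_mul, hprim.pow_eq_one]
  have hJstar : (Jmat p q)ᴴ = clockMatrix q (halfPhase p q ^ 2)⁻¹ := by
    rw [Jmat_eq_clockMatrix, clockMatrix_conjTranspose, Complex.star_def,
      ← inv_eq_conj (hprim.norm'_eq_one hq.ne')]
  have hVV' := chirpMatrix_mul_conjTranspose hprim
  have hVV := mul_eq_one_comm.mp hVV'
  refine ⟨chirpMatrix q (halfPhase p q), hVV, hVV', ?_, ?_, ?_⟩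
  · rw [Jmat_eq_clockMatrix]
    exact mul_mul_eq_of_mul_eq_one_of_mul_eq_mul hVV (conjTranspose_Kmat_mul_chirpMatrix hζ)
  · rw [neg_one_zpow_mul_exp_eq_halfPhase_zpow p hq.ne', hJstar, Jmat_eq_clockMatrix]
    exact mul_mul_eq_of_mul_eq_one_of_mul_eq_mul hVV (clockMatrix_mul_chirpMatrix hζ)
  · rw [neg_one_zpow_mul_exp_eq_halfPhase_zpow p hq.ne', hJstar]
    exact mul_mul_eq_of_mul_eq_one_of_mul_eq_mul hVV
      (smul_clockMatrix_inv_mul_Kmat_mul_chirpMatrix hζ)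
end
end

section
/- (Chambers formula for Harper) Let p ∈ ℤ and q ∈ ℕ* be relatively prime, γ = 2πp/q, and let M_H(θ₁,θ₂) = (1/2)(e^{iθ₁} J_{p,q} + e^{-iθ₁} J_{p,q}* + e^{iθ₂} K_q + e^{-iθ₂} K_q*). There exists a polynomial f of degree q with real coefficients, depending only on p and q, such that for all (θ₁,θ₂) ∈ ℝ² and all λ ∈ ℂ, det(M_H(θ₁,θ₂) - λ·I_q) = f(λ) + (-1)^{q+1} 2^{1-q} (cos(qθ₁) + cos(qθ₂)). -/
noncomputable section

open Matrix Complex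

/-- The Harper matrix
`M_H(θ₁,θ₂) = (1/2)(e^{iθ₁} J_{p,q} + e^{-iθ₁} J_{p,q}* + e^{iθ₂} K_q + e^{-iθ₂} K_q*)`. -/
def MH (p : ℤ) (q : ℕ) (θ₁ θ₂ : ℝ) : Matrix (Fin q) (Fin q) ℂ :=
  (1 / 2 : ℂ) • (Complex.exp (Complex.I * (θ₁ : ℂ)) • Jmat p q
    + Complex.exp (-(Complex.I) * (θ₁ : ℂ)) • (Jmat p q)ᴴ
    + Complex.exp (Complex.I * (θ₂ : ℂ)) • Kmat q
    + Complex.exp (-(Complex.I) * (θ₂ : ℂ)) • (Kmat q)ᴴ)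

/-!
For fixed `θ₂` and `λ`, `z • (M_H − λ)` with `z = e^{iθ₁}` is a quadratic matrix pencil
`z² A + z B + D` with `A = J/2`, `D = J*/2`, so its determinant is a polynomial of degree at most
`2q` in `z`, with constant and top coefficients `det D = det A = (-1)^{q+1} 2^{-q}` (`det J` is
the product of all `q`-th roots of unity). Conjugation by the shift `K` multiplies `J` by the
primitive `q`-th root of unity `ω = e^{iγ}` and fixes `B`, so this polynomial is invariant under
`z ↦ ω z` and hence is a polynomial in `z ^ q`. Therefore
`det (M_H − λ) = c(θ₂, λ) + (-1)^{q+1} 2^{1-q} cos (q θ₁)`, and conjugating by `J` instead gives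
the same expansion in `θ₂`. Comparing the two leaves a remainder depending on `λ` alone: the
determinant at a reference point, a real polynomial of degree `q` since `M_H` is Hermitian.
-/

open scoped Polynomial

namespace Polynomial

variable {α : Type*} [CommRing α]

theorem expand_contract_of_coeff_eq_zero {f : α[X]} {p : ℕ} (hp : p ≠ 0)
    (hf : ∀ k, ¬ p ∣ k → f.coeff k = 0) : expand α p (contract p f) = f := by
  ext k
  rw [coeff_expand hp.bot_lt, coeff_contract hp]
  split_ifs with h
  · rw [Nat.div_mul_cancel h]
  · exact (hf k h).symm

theorem expand_contract_of_eval_mul_eq {K : Type*} [Field K] [Infinite K] {P : K[X]} {u : K}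
    {m : ℕ} (hu : IsPrimitiveRoot u m) (hm : m ≠ 0) (hP : ∀ z, P.eval (u * z) = P.eval z) :
    expand K m (contract m P) = P := by
  refine expand_contract_of_coeff_eq_zero hm fun k hk => ?_
  have hcomp : P.comp (C u * X) = P := Polynomial.funext fun z => by simpa using hP z
  have hcoeff : P.coeff k * u ^ k = P.coeff k := by
    simpa using congrArg (coeff · k) hcomp
  exact (mul_right_eq_self₀.mp hcoeff).resolve_left fun h => hk (hu.pow_eq_one_iff_dvd k |>.mp h)

end Polynomial

theorem IsPrimitiveRoot.prod_range_pow {R : Type*} [CommRing R] [IsDomain R] {ζ : R} {q : ℕ}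
    (hζ : IsPrimitiveRoot ζ q) (hq : 0 < q) : ∏ j ∈ Finset.range q, ζ ^ j = (-1) ^ (q + 1) := by
  rw [Finset.prod_pow_eq_pow_sum, Finset.sum_range_id]
  rcases Nat.even_or_odd' q with ⟨m, rfl | rfl⟩
  · have hm : 0 < m := by omega
    have hζm : ζ ^ m = -1 := by
      have := hζ.pow_of_dvd hm.ne' (dvd_mul_left m 2)
      rw [Nat.mul_div_cancel _ hm] at this
      exact this.eq_neg_one_of_two_right
    rw [mul_assoc, Nat.mul_div_cancel_left _ two_pos, pow_mul, hζm,
      Odd.neg_one_pow ⟨m - 1, by omega⟩, Odd.neg_one_pow (odd_two_mul_add_one m)]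
  · rw [Nat.add_sub_cancel, mul_left_comm, Nat.mul_div_cancel_left _ two_pos, pow_mul,
      hζ.pow_eq_one, one_pow, Even.neg_one_pow ⟨m + 1, by ring⟩]

theorem mul_eq_smul_mul_of_inverse {R A : Type*} [CommSemiring R] [Semiring A] [Algebra R A]
    {a a' b : A} {c : R} (h : a * b = c • (b * a)) (h₁ : a' * a = 1) (h₂ : a * a' = 1) :
    b * a' = c • (a' * b) :=
  calc b * a' = a' * (a * b) * a' := by rw [← mul_assoc, h₁, one_mul]
    _ = c • (a' * b) := by
      rw [h, mul_smul_comm, smul_mul_assoc, mul_assoc, mul_assoc, h₂, mul_one]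

namespace Matrix

open Polynomial

variable {n α : Type*} [CommRing α]

def quadraticPencil (A B D : Matrix n n α) : Matrix n n α[X] :=
  of fun i j => C (A i j) * X ^ 2 + C (B i j) * X + C (D i j)

theorem natDegree_quadraticPencil_apply_le (A B D : Matrix n n α) (i j : n) :
    (quadraticPencil A B D i j).natDegree ≤ 2 := by
  rw [quadraticPencil, of_apply]
  compute_degree

variable [DecidableEq n] [Fintype n]

theorem natDegree_det_le {M : Matrix n n α[X]} {d : ℕ} (hM : ∀ i j, (M i j).natDegree ≤ d) :
    M.det.natDegree ≤ Fintype.card n * d := by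
  rw [det_apply]
  refine natDegree_sum_le_of_forall_le _ _ fun g _ => ?_
  rw [Units.smul_def]
  refine (natDegree_smul_le _ _).trans ((natDegree_prod_le _ _).trans ?_)
  exact (Finset.sum_le_card_nsmul _ _ d fun i _ => hM (g i) i).trans_eq (by simp)

theorem coeff_det_card_mul {M : Matrix n n α[X]} {d : ℕ} (hM : ∀ i j, (M i j).natDegree ≤ d) :
    M.det.coeff (Fintype.card n * d) = (M.map (coeff · d)).det := by
  rw [det_apply, det_apply, finsetSum_coeff]
  refine Finset.sum_congr rfl fun g _ => ?_
  rw [Units.smul_def, Units.smul_def, coeff_smul, ← Finset.card_univ,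
    coeff_prod_of_natDegree_le (s := Finset.univ) (fun i => M (g i) i) d fun i _ => hM (g i) i]
  rfl

theorem eval_det_quadraticPencil (A B D : Matrix n n α) (z : α) :
    (quadraticPencil A B D).det.eval z = det (z ^ 2 • A + z • B + D) := by
  rw [← coe_evalRingHom, RingHom.map_det]
  congr 1
  ext i j
  simp only [quadraticPencil, RingHom.mapMatrix_apply, map_apply, of_apply, add_apply,
    smul_apply, smul_eq_mul, coe_evalRingHom, eval_add, eval_mul, eval_pow, eval_X, eval_C]
  ring

theorem coeff_det_quadraticPencil_zero (A B D : Matrix n n α) :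
    (quadraticPencil A B D).det.coeff 0 = det D := by
  rw [coeff_zero_eq_eval_zero, eval_det_quadraticPencil]
  simp

theorem coeff_det_quadraticPencil_two_mul_card (A B D : Matrix n n α) :
    (quadraticPencil A B D).det.coeff (2 * Fintype.card n) = det A := by
  rw [mul_comm, coeff_det_card_mul (natDegree_quadraticPencil_apply_le A B D)]
  congr 1
  ext i j
  simp [quadraticPencil]

section Field

variable {K : Type*} [Field K]

theorem det_sq_smul_add_smul_add_eq_of_conj {A B D U : Matrix n n K} {u : K}
    (hu : u ^ Fintype.card n = 1) (hU : IsUnit U.det)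
    (hA : U * A = u • (A * U)) (hB : Commute U B) (hD : u • (U * D) = D * U) (z : K) :
    det ((u * z) ^ 2 • A + (u * z) • B + D) = det (z ^ 2 • A + z • B + D) := by
  have hconj : u • (U * (z ^ 2 • A + z • B + D)) = ((u * z) ^ 2 • A + (u * z) • B + D) * U := by
    rw [mul_add, mul_add, mul_smul_comm, mul_smul_comm, hA, hB.eq, smul_add, smul_add, hD,
      add_mul, add_mul, smul_mul_assoc, smul_mul_assoc]
    module
  have hdet := congrArg det hconj
  rw [det_smul, det_mul, det_mul, hu, one_mul, mul_comm] at hdet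
  exact (mul_right_cancel₀ hU.ne_zero hdet).symm

theorem exists_det_smul_add_add_inv_smul_eq [Infinite K] [Nonempty n]
    {A B D U : Matrix n n K} {u : K} (hu : IsPrimitiveRoot u (Fintype.card n)) (hU : IsUnit U.det)
    (hA : U * A = u • (A * U)) (hB : Commute U B) (hD : u • (U * D) = D * U) :
    ∃ c : K, ∀ z : K, z ≠ 0 → det (z • A + B + z⁻¹ • D) =
      det A * z ^ Fintype.card n + c + det D * z⁻¹ ^ Fintype.card n := by
  set q := Fintype.card n
  have hq : q ≠ 0 := Fintype.card_ne_zero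
  set P := (quadraticPencil A B D).det
  have hP : expand K q (contract q P) = P := by
    refine expand_contract_of_eval_mul_eq hu hq fun z => ?_
    rw [eval_det_quadraticPencil, eval_det_quadraticPencil]
    exact det_sq_smul_add_smul_add_eq_of_conj hu.pow_eq_one hU hA hB hD z
  set Q := contract q P
  have hQ : Q.natDegree < 3 := by
    have : P.natDegree ≤ q * 2 := natDegree_det_le (natDegree_quadraticPencil_apply_le A B D)
    rw [← hP, natDegree_expand, mul_comm q] at this
    have := Nat.le_of_mul_le_mul_right this (Nat.pos_of_ne_zero hq)
    omega
  refine ⟨Q.coeff 1, fun z hz => mul_left_cancel₀ (pow_ne_zero q hz) ?_⟩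
  have hscale : z • (z • A + B + z⁻¹ • D) = z ^ 2 • A + z • B + D := by
    rw [smul_add, smul_add, smul_smul, smul_smul, mul_inv_cancel₀ hz, one_smul, ← sq]
  have heval : P.eval z = det D + Q.coeff 1 * z ^ q + det A * z ^ q * z ^ q := by
    rw [← hP, expand_eval, eval_eq_sum_range' hQ]
    simp only [Finset.sum_range_succ, Finset.sum_range_zero, Q, coeff_contract hq]
    rw [zero_mul, one_mul, coeff_det_quadraticPencil_zero, coeff_det_quadraticPencil_two_mul_card]
    ring
  calc z ^ q * det (z • A + B + z⁻¹ • D) = det (z • (z • A + B + z⁻¹ • D)) := by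
        rw [det_smul]
    _ = P.eval z := by rw [hscale, eval_det_quadraticPencil]
    _ = _ := by rw [heval, inv_pow]; field_simp; ring

end Field

theorem exists_det_exp_smul_add_add_exp_neg_smul_eq {n : Type*} [DecidableEq n] [Fintype n]
    [Nonempty n] {A B D U : Matrix n n ℂ} {u σ : ℂ}
    (hu : IsPrimitiveRoot u (Fintype.card n)) (hU : IsUnit U.det)
    (hA : U * A = u • (A * U)) (hB : Commute U B) (hD : u • (U * D) = D * U)
    (hdetA : A.det = σ) (hdetD : D.det = σ) :
    ∃ c : ℂ, ∀ θ : ℝ, det (exp (I * θ) • A + B + exp (-I * θ) • D) =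
      c + 2 * σ * Real.cos (Fintype.card n * θ) := by
  obtain ⟨c, hc⟩ := exists_det_smul_add_add_inv_smul_eq hu hU hA hB hD
  refine ⟨c, fun θ => ?_⟩
  rw [neg_mul, Complex.exp_neg, hc _ (Complex.exp_ne_zero _), hdetA, hdetD, ← Complex.exp_neg,
    ← Complex.exp_nat_mul, ← Complex.exp_nat_mul, Complex.ofReal_cos, Complex.cos]
  push_cast
  ring_nf

open Polynomial in
theorem IsHermitian.exists_real_poly_eval_eq_det_sub_smul {n 𝕜 : Type*} [Fintype n]
    [DecidableEq n] [RCLike 𝕜] {A : Matrix n n 𝕜} (hA : A.IsHermitian) :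
    ∃ f : ℝ[X], f.degree = Fintype.card n ∧ ∀ l : 𝕜, aeval l f = det (A - l • 1) := by
  refine ⟨∏ i, (C (hA.eigenvalues i) - X), ?_, fun l => ?_⟩
  · simp_rw [degree_prod, ← neg_sub (X : ℝ[X]), degree_neg, degree_X_sub_C]
    simp
  · have hchar := congrArg (eval l) hA.charpoly_eq
    rw [eval_charpoly, eval_prod, scalar_apply, ← smul_one_eq_diagonal] at hchar
    rw [← neg_sub, det_neg, hchar, Finset.card_univ.symm, ← Finset.prod_const,
      ← Finset.prod_mul_distrib, map_prod]
    simp [RCLike.algebraMap_eq_ofReal]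

end Matrix

namespace Harper

def phase (p : ℤ) (q : ℕ) : ℂ := exp (I * ((2 * Real.pi * p / q : ℝ) : ℂ))

variable {p : ℤ} {q : ℕ}

theorem phase_ne_zero : phase p q ≠ 0 := exp_ne_zero _

theorem phase_pow_self : phase p q ^ q = 1 := by
  rcases Nat.eq_zero_or_pos q with rfl | hq
  · exact pow_zero _
  rw [phase, ← Complex.exp_nat_mul, Complex.exp_eq_one_iff]
  refine ⟨p, ?_⟩
  have : (q : ℂ) ≠ 0 := by exact_mod_cast hq.ne'
  push_cast
  field_simp

theorem isPrimitiveRoot_phase (hq : 0 < q) (hpq : Int.gcd p (q : ℤ) = 1) :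
    IsPrimitiveRoot (phase p q) q := by
  convert Complex.isPrimitiveRoot_exp_of_isCoprime p q hq.ne'
    (Int.isCoprime_iff_gcd_eq_one.mpr hpq) using 1
  rw [phase]
  push_cast
  ring_nf

theorem Jmat_eq_diagonal : Jmat p q = diagonal fun j : Fin q => phase p q ^ (j : ℕ) := by
  refine congrArg diagonal (funext fun j => ?_)
  rw [phase, ← Complex.exp_nat_mul]
  ring_nf

theorem Kmat_eq_permMatrix : Kmat q = (finRotate q).permMatrix ℂ := by
  cases q with
  | zero => exact Subsingleton.elim _ _
  | succ n =>
    ext j k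
    simp only [Kmat, of_apply, Equiv.Perm.permMatrix, PEquiv.toMatrix_apply, Equiv.toPEquiv_apply,
      finRotate_apply, Option.mem_def, Option.some.injEq, Fin.ext_iff, Fin.val_add, Fin.val_one',
      Nat.add_mod_mod]

theorem Kmat_mul_diagonal_pow {ζ : ℂ} (hζ : ζ ^ q = 1) :
    Kmat q * diagonal (fun j : Fin q => ζ ^ (j : ℕ)) =
      ζ • (diagonal (fun j : Fin q => ζ ^ (j : ℕ)) * Kmat q) := by
  ext j k
  simp only [Kmat, mul_diagonal, diagonal_mul, of_apply, Matrix.smul_apply, smul_eq_mul]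
  split_ifs with h
  · rw [← h, ← pow_eq_pow_mod _ hζ, pow_succ']
    ring
  · simp

theorem Jmat_mul_conjTranspose : Jmat p q * (Jmat p q)ᴴ = 1 := by
  rw [Jmat, diagonal_conjTranspose, diagonal_mul_diagonal, ← diagonal_one]
  refine congrArg diagonal (funext fun j => ?_)
  rw [Pi.star_apply, Complex.star_def, ← Complex.exp_conj, ← Complex.exp_add]
  simp only [map_mul, Complex.conj_I, Complex.conj_natCast, Complex.conj_ofReal]
  convert Complex.exp_zero using 2
  ring

theorem Kmat_mul_conjTranspose : Kmat q * (Kmat q)ᴴ = 1 := by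
  rw [Kmat_eq_permMatrix, conjTranspose_permMatrix, ← permMatrix_mul, inv_mul_cancel,
    permMatrix_one]

theorem det_Jmat (hq : 0 < q) (hpq : Int.gcd p (q : ℤ) = 1) :
    (Jmat p q).det = (-1) ^ (q + 1) := by
  rw [Jmat_eq_diagonal, det_diagonal, Fin.prod_univ_eq_prod_range (fun j => phase p q ^ j),
    (isPrimitiveRoot_phase hq hpq).prod_range_pow hq]

theorem det_Kmat (hq : 0 < q) : (Kmat q).det = (-1) ^ (q + 1) := by
  obtain ⟨n, rfl⟩ : ∃ n, q = n + 1 := ⟨q - 1, by omega⟩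
  rw [Kmat_eq_permMatrix, det_permutation, sign_finRotate]
  simp [pow_succ]

theorem isHermitian_MH (θ₁ θ₂ : ℝ) : (MH p q θ₁ θ₂).IsHermitian := by
  have hstar : ∀ θ : ℝ, star (exp (I * θ)) = exp (-I * θ) := fun θ => by
    rw [Complex.star_def, ← Complex.exp_conj]
    simp
  have hstar' : ∀ θ : ℝ, star (exp (-I * θ)) = exp (I * θ) := fun θ => by
    rw [← hstar, star_star]
  rw [IsHermitian, MH]
  simp only [conjTranspose_smul, conjTranspose_add, conjTranspose_conjTranspose, hstar, hstar',
    star_div₀, star_one, star_ofNat]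
  module

theorem MH_sub_smul_eq_left (θ₁ θ₂ : ℝ) (l : ℂ) :
    MH p q θ₁ θ₂ - l • 1 = (1 / 2 : ℂ) • (exp (I * θ₁) • Jmat p q
      + (exp (I * θ₂) • Kmat q + exp (-I * θ₂) • (Kmat q)ᴴ - (2 * l) • 1)
      + exp (-I * θ₁) • (Jmat p q)ᴴ) := by
  rw [MH]
  module

theorem MH_sub_smul_eq_right (θ₁ θ₂ : ℝ) (l : ℂ) :
    MH p q θ₁ θ₂ - l • 1 = (1 / 2 : ℂ) • (exp (I * θ₂) • Kmat q
      + (exp (I * θ₁) • Jmat p q + exp (-I * θ₁) • (Jmat p q)ᴴ - (2 * l) • 1)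
      + exp (-I * θ₂) • (Kmat q)ᴴ) := by
  rw [MH]
  module

theorem two_zpow_one_sub (q : ℕ) : (2 : ℂ) ^ ((1 : ℤ) - q) = 2 * (1 / 2) ^ q := by
  rw [zpow_sub₀ two_ne_zero, zpow_one, zpow_natCast, one_div, inv_pow, div_eq_mul_inv]

theorem Kmat_mul_Jmat : Kmat q * Jmat p q = phase p q • (Jmat p q * Kmat q) := by
  rw [Jmat_eq_diagonal]
  exact Kmat_mul_diagonal_pow phase_pow_self

theorem Jmat_mul_Kmat : Jmat p q * Kmat q = (phase p q)⁻¹ • (Kmat q * Jmat p q) := by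
  rw [Kmat_mul_Jmat, smul_smul, inv_mul_cancel₀ phase_ne_zero, one_smul]

theorem exists_det_MH_sub_smul_eq_left (hq : 0 < q) (hpq : Int.gcd p (q : ℤ) = 1) (θ₂ : ℝ)
    (l : ℂ) : ∃ c : ℂ, ∀ θ₁ : ℝ, det (MH p q θ₁ θ₂ - l • 1) =
      c + (-1) ^ (q + 1) * 2 ^ ((1 : ℤ) - q) * (Real.cos (q * θ₁) : ℂ) := by
  have : Nonempty (Fin q) := ⟨⟨0, hq⟩⟩
  have hKK : Commute (Kmat q) (Kmat q)ᴴ :=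
    Kmat_mul_conjTranspose.trans (mul_eq_one_comm.mp Kmat_mul_conjTranspose).symm
  have hB : Commute (Kmat q) (exp (I * θ₂) • Kmat q + exp (-I * θ₂) • (Kmat q)ᴴ - (2 * l) • 1) :=
    (((Commute.refl _).smul_right _).add_right (hKK.smul_right _)).sub_right
      ((Commute.one_right _).smul_right _)
  have hD : phase p q • (Kmat q * (Jmat p q)ᴴ) = (Jmat p q)ᴴ * Kmat q := by
    rw [mul_eq_smul_mul_of_inverse Jmat_mul_Kmat
      (mul_eq_one_comm.mp Jmat_mul_conjTranspose) Jmat_mul_conjTranspose,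
      smul_smul, mul_inv_cancel₀ phase_ne_zero, one_smul]
  obtain ⟨c, hc⟩ := exists_det_exp_smul_add_add_exp_neg_smul_eq
    (by rw [Fintype.card_fin]; exact isPrimitiveRoot_phase hq hpq)
    (by rw [det_Kmat hq]; exact isUnit_neg_one.pow _) Kmat_mul_Jmat hB hD
    (det_Jmat hq hpq) (by rw [det_conjTranspose, det_Jmat hq hpq]; simp)
  refine ⟨(1 / 2) ^ q * c, fun θ₁ => ?_⟩
  rw [MH_sub_smul_eq_left, det_smul, hc, two_zpow_one_sub, Fintype.card_fin]
  ring

theorem exists_det_MH_sub_smul_eq_right (hq : 0 < q) (hpq : Int.gcd p (q : ℤ) = 1) (θ₁ : ℝ)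
    (l : ℂ) : ∃ c : ℂ, ∀ θ₂ : ℝ, det (MH p q θ₁ θ₂ - l • 1) =
      c + (-1) ^ (q + 1) * 2 ^ ((1 : ℤ) - q) * (Real.cos (q * θ₂) : ℂ) := by
  have : Nonempty (Fin q) := ⟨⟨0, hq⟩⟩
  have hJJ : Commute (Jmat p q) (Jmat p q)ᴴ :=
    Jmat_mul_conjTranspose.trans (mul_eq_one_comm.mp Jmat_mul_conjTranspose).symm
  have hB : Commute (Jmat p q)
      (exp (I * θ₁) • Jmat p q + exp (-I * θ₁) • (Jmat p q)ᴴ - (2 * l) • 1) :=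
    (((Commute.refl _).smul_right _).add_right (hJJ.smul_right _)).sub_right
      ((Commute.one_right _).smul_right _)
  have hD : (phase p q)⁻¹ • (Jmat p q * (Kmat q)ᴴ) = (Kmat q)ᴴ * Jmat p q := by
    rw [mul_eq_smul_mul_of_inverse Kmat_mul_Jmat
      (mul_eq_one_comm.mp Kmat_mul_conjTranspose) Kmat_mul_conjTranspose,
      smul_smul, inv_mul_cancel₀ phase_ne_zero, one_smul]
  obtain ⟨c, hc⟩ := exists_det_exp_smul_add_add_exp_neg_smul_eq
    (by rw [Fintype.card_fin]; exact (isPrimitiveRoot_phase hq hpq).inv)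
    (by rw [det_Jmat hq hpq]; exact isUnit_neg_one.pow _) Jmat_mul_Kmat hB hD
    (det_Kmat hq) (by rw [det_conjTranspose, det_Kmat hq]; simp)
  refine ⟨(1 / 2) ^ q * c, fun θ₂ => ?_⟩
  rw [MH_sub_smul_eq_right, det_smul, hc, two_zpow_one_sub, Fintype.card_fin]
  ring

end Harper

theorem stmt_3 (p : ℤ) (q : ℕ) (hq : 0 < q) (hpq : Int.gcd p (q : ℤ) = 1) :
    ∃ f : Polynomial ℝ, f.degree = q ∧
      ∀ (θ₁ θ₂ : ℝ) (l : ℂ),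
        Matrix.det (MH p q θ₁ θ₂ - l • (1 : Matrix (Fin q) (Fin q) ℂ)) =
          Polynomial.aeval l f
            + (-1 : ℂ) ^ (q + 1) * (2 : ℂ) ^ ((1 : ℤ) - (q : ℤ)) *
              (((Real.cos (q * θ₁) + Real.cos (q * θ₂)) : ℝ) : ℂ) := by
  obtain ⟨θ₀, hcos⟩ : ∃ θ₀ : ℝ, Real.cos (q * θ₀) = 0 := by
    refine ⟨Real.pi / (2 * q), ?_⟩
    rw [show (q : ℝ) * (Real.pi / (2 * q)) = Real.pi / 2 by field_simp, Real.cos_pi_div_two]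
  obtain ⟨f, hdeg, hf⟩ :=
    (Harper.isHermitian_MH (p := p) (q := q) θ₀ θ₀).exists_real_poly_eval_eq_det_sub_smul
  refine ⟨f, by rwa [Fintype.card_fin] at hdeg, fun θ₁ θ₂ l => ?_⟩
  obtain ⟨c₁, hc₁⟩ := Harper.exists_det_MH_sub_smul_eq_left hq hpq θ₂ l
  obtain ⟨c₂, hc₂⟩ := Harper.exists_det_MH_sub_smul_eq_right hq hpq θ₀ l
  rw [hf, hc₁, Complex.ofReal_add]
  have h₁ := hc₁ θ₀
  have h₂ := hc₂ θ₂
  have h₃ := hc₂ θ₀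
  rw [hcos, Complex.ofReal_zero] at h₁ h₃
  linear_combination h₂ - h₁ - h₃
end
end

section
/- (Graphene reduction to the triangular model) Let p ∈ ℤ and q ∈ ℕ* be relatively prime, γ = 2πp/q. Let M_G(θ₁,θ₂) be the 2q×2q matrix with zero diagonal blocks, upper-right block A = I_q + e^{iθ₁} J_{p,q} + e^{iθ₂} K_q, and lower-left block A* = I_q + e^{-iθ₁} J_{p,q}* + e^{-iθ₂} K_q*. Then for all (θ₁,θ₂) ∈ ℝ² and all λ ∈ ℂ, det(M_G(θ₁,θ₂) - λ·I_{2q}) = (-1)^q det(M_T(θ₁,θ₂,0) + (3 - λ²)·I_q), where M_T(θ₁,θ₂,0) = e^{iθ₁} J_{p,q} + e^{-iθ₁} J_{p,q}* + e^{iθ₂} K_q + e^{-iθ₂} K_q* + e^{i(θ₁-θ₂)} J_{p,q} K_q* + e^{i(θ₂-θ₁)} K_q J_{p,q}*. -/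
noncomputable section

open Matrix Complex

/-- `A(θ₁,θ₂) = I_q + e^{iθ₁} J_{p,q} + e^{iθ₂} K_q`. -/
def Agr (p : ℤ) (q : ℕ) (θ₁ θ₂ : ℝ) : Matrix (Fin q) (Fin q) ℂ :=
  1 + Complex.exp (Complex.I * (θ₁ : ℂ)) • Jmat p q
    + Complex.exp (Complex.I * (θ₂ : ℂ)) • Kmat q

/-- The graphene matrix `M_G(θ₁,θ₂)` : the `2q × 2q` block matrix `[[0, A],[A*, 0]]`. -/
def MG (p : ℤ) (q : ℕ) (θ₁ θ₂ : ℝ) : Matrix (Fin q ⊕ Fin q) (Fin q ⊕ Fin q) ℂ :=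
  Matrix.fromBlocks 0 (Agr p q θ₁ θ₂) (Agr p q θ₁ θ₂)ᴴ 0

/-- The triangular Harper matrix at `φ = 0`. -/
def MT0 (p : ℤ) (q : ℕ) (θ₁ θ₂ : ℝ) : Matrix (Fin q) (Fin q) ℂ :=
  Complex.exp (Complex.I * (θ₁ : ℂ)) • Jmat p q
    + Complex.exp (-(Complex.I) * (θ₁ : ℂ)) • (Jmat p q)ᴴ
    + Complex.exp (Complex.I * (θ₂ : ℂ)) • Kmat q
    + Complex.exp (-(Complex.I) * (θ₂ : ℂ)) • (Kmat q)ᴴ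
    + Complex.exp (Complex.I * ((θ₁ - θ₂ : ℝ) : ℂ)) • (Jmat p q * (Kmat q)ᴴ)
    + Complex.exp (Complex.I * ((θ₂ - θ₁ : ℝ) : ℂ)) • (Kmat q * (Jmat p q)ᴴ)

/-! Since the diagonal blocks of `M_G - λ` are the scalar `-λ`, a Schur complement gives
`det (M_G - λ) = det (λ² - A A*)`. As `J_{p,q}` and `K_q` are unitary and the phases have modulus
one, expanding `A A*` gives `3 + M_T(θ₁,θ₂,0)`. -/

namespace Matrix

variable {R n : Type*} [CommRing R] [Fintype n] [DecidableEq n]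

theorem det_fromBlocks_smul_one_of_isRightRegular {c : R} (hc : IsRightRegular c)
    (A B : Matrix n n R) :
    (fromBlocks (c • 1) A B (c • 1)).det = (c ^ 2 • 1 - A * B).det := by
  have hprod : fromBlocks (c • 1) A B (c • 1) * fromBlocks (c • 1) 0 (-B) 1
      = fromBlocks (c ^ 2 • 1 - A * B) A 0 (c • (1 : Matrix n n R)) := by
    simp only [fromBlocks_multiply]
    congr 1 <;> simp [sq, smul_smul, sub_eq_add_neg]
  have h := congrArg det hprod
  rw [det_mul, det_fromBlocks_zero₁₂, det_fromBlocks_zero₂₁, det_one, mul_one, det_smul,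
    det_one, mul_one] at h
  exact hc.pow _ h

open Polynomial in
theorem det_fromBlocks_smul_one (c : R) (A B : Matrix n n R) :
    (fromBlocks (c • 1) A B (c • 1)).det = (c ^ 2 • 1 - A * B).det := by
  -- `X` is regular in `R[X]`, so the identity holds there; evaluate it at `c`.
  have hX := congrArg (evalRingHom c) <| det_fromBlocks_smul_one_of_isRightRegular
    isRegular_X.right (A.map C) (B.map C)
  have hsmul (a : R[X]) : (a • 1 : Matrix n n R[X]).map (evalRingHom c) = a.eval c • 1 := by
    rw [smul_one_eq_diagonal, smul_one_eq_diagonal, diagonal_map] <;> simp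
  have hC (M : Matrix n n R) : (M.map C).map (evalRingHom c) = M := by
    ext; simp
  rwa [RingHom.map_det, RingHom.map_det, map_sub, map_mul, RingHom.mapMatrix_apply,
    RingHom.mapMatrix_apply, RingHom.mapMatrix_apply, RingHom.mapMatrix_apply, fromBlocks_map,
    hsmul, hsmul, hC, hC, eval_X, eval_pow, eval_X] at hX

end Matrix

theorem one_add_smul_add_smul_mul_star_self {R A : Type*} [CommRing R] [StarRing R] [Ring A]
    [StarRing A] [Algebra R A] [StarModule R A] {U V : A} (hU : U * star U = 1)
    (hV : V * star V = 1) {a b : R} (ha : a * star a = 1) (hb : b * star b = 1) :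
    (1 + a • U + b • V) * star (1 + a • U + b • V) =
      a • U + star a • star U + b • V + star b • star V + (a * star b) • (U * star V)
        + (b * star a) • (V * star U) + (3 : R) • 1 := by
  simp only [star_add, star_one, star_smul, add_mul, mul_add, one_mul, mul_one, smul_mul_smul,
    hU, hV, ha, hb, one_smul]
  module

theorem star_exp_I_mul_ofReal (x : ℝ) : star (exp (I * x)) = exp (-I * x) := by
  rw [Complex.star_def, ← exp_conj]
  simp

theorem exp_I_mul_ofReal_mul_star (x : ℝ) : exp (I * x) * star (exp (I * x)) = 1 := by
  rw [star_exp_I_mul_ofReal, ← exp_add, ← add_mul, add_neg_cancel, zero_mul, exp_zero]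

theorem exp_I_mul_ofReal_mul_exp_neg_I_mul_ofReal (x y : ℝ) :
    exp (I * x) * exp (-I * y) = exp (I * ↑(x - y)) := by
  rw [← exp_add]
  push_cast
  ring_nf

theorem Jmat_mul_conjTranspose (p : ℤ) (q : ℕ) : Jmat p q * (Jmat p q)ᴴ = 1 := by
  rw [Jmat, diagonal_conjTranspose, diagonal_mul_diagonal, ← diagonal_one]
  congr 1
  ext j
  rw [Pi.star_apply, mul_assoc, ← ofReal_natCast, ← ofReal_mul]
  exact exp_I_mul_ofReal_mul_star _

theorem Kmat_eq_permMatrix (q : ℕ) : Kmat q = (finRotate q).permMatrix ℂ := by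
  ext j k
  have := j.neZero
  simp [Kmat, PEquiv.toMatrix_apply, Fin.ext_iff, Fin.val_add, Nat.add_mod]

theorem Kmat_mul_conjTranspose (q : ℕ) : Kmat q * (Kmat q)ᴴ = 1 := by
  rw [Kmat_eq_permMatrix, conjTranspose_permMatrix, ← permMatrix_mul, inv_mul_cancel,
    permMatrix_one]

theorem Agr_mul_conjTranspose (p : ℤ) (q : ℕ) (θ₁ θ₂ : ℝ) :
    Agr p q θ₁ θ₂ * (Agr p q θ₁ θ₂)ᴴ = MT0 p q θ₁ θ₂ + (3 : ℂ) • 1 := by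
  have h := one_add_smul_add_smul_mul_star_self (Jmat_mul_conjTranspose p q)
    (Kmat_mul_conjTranspose q) (exp_I_mul_ofReal_mul_star θ₁) (exp_I_mul_ofReal_mul_star θ₂)
  simp only [star_eq_conjTranspose, star_exp_I_mul_ofReal,
    exp_I_mul_ofReal_mul_exp_neg_I_mul_ofReal] at h
  rw [Agr, h, MT0]

theorem stmt_5_general (p : ℤ) (q : ℕ) (θ₁ θ₂ : ℝ) (l : ℂ) :
    Matrix.det (MG p q θ₁ θ₂ - l • (1 : Matrix (Fin q ⊕ Fin q) (Fin q ⊕ Fin q) ℂ)) =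
      (-1 : ℂ) ^ q *
        Matrix.det (MT0 p q θ₁ θ₂ + (3 - l ^ 2) • (1 : Matrix (Fin q) (Fin q) ℂ)) := by
  have hblocks : MG p q θ₁ θ₂ - l • (1 : Matrix (Fin q ⊕ Fin q) (Fin q ⊕ Fin q) ℂ) =
      fromBlocks ((-l) • 1) (Agr p q θ₁ θ₂) (Agr p q θ₁ θ₂)ᴴ ((-l) • 1) := by
    rw [MG, ← fromBlocks_one, fromBlocks_smul, sub_eq_add_neg, fromBlocks_neg, fromBlocks_add]
    simp
  have hschur : (-l) ^ 2 • 1 - (MT0 p q θ₁ θ₂ + (3 : ℂ) • 1) =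
      -(MT0 p q θ₁ θ₂ + (3 - l ^ 2) • (1 : Matrix (Fin q) (Fin q) ℂ)) := by
    module
  rw [hblocks, det_fromBlocks_smul_one, Agr_mul_conjTranspose, hschur, det_neg, Fintype.card_fin]

theorem stmt_5 (p : ℤ) (q : ℕ) (hq : 0 < q) (hpq : Int.gcd p (q : ℤ) = 1)
    (θ₁ θ₂ : ℝ) (l : ℂ) :
    Matrix.det (MG p q θ₁ θ₂ - l • (1 : Matrix (Fin q ⊕ Fin q) (Fin q ⊕ Fin q) ℂ)) =
      (-1 : ℂ) ^ q *
        Matrix.det (MT0 p q θ₁ θ₂ + (3 - l ^ 2) • (1 : Matrix (Fin q) (Fin q) ℂ)) :=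
  stmt_5_general p q θ₁ θ₂ l
end
end

section
/- Let p ∈ ℤ and q ∈ ℕ* be relatively prime, γ = 2πp/q. There exists (θ₁,θ₂) ∈ ℝ² such that det(I_q + e^{iθ₁} J_{p,q} + e^{iθ₂} K_q) = 0; for example θ₁ = π + π/(3q) and θ₂ = π - π/(3q) work. -/
noncomputable section

open Matrix Complex

/-!
Write `a = e^{iθ₁}`, `b = e^{iθ₂}` and `ω = e^{iγ}`, a primitive `q`-th root of unity.
The matrix `I + a J + b K` is the diagonal `dⱼ = 1 + a ωʲ` plus `b` times the cyclic shift,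
so it has the kernel vector `vⱼ = ∏_{k<j} dₖ / (-b)` as soon as `v` closes up after `q` steps,
i.e. `∏ₖ dₖ = (-b)^q`. Since `∏ₖ (1 + a ωᵏ) = 1 - (-a)^q`, this is `(-a)^q + (-b)^q = 1`,
and for the given angles `(-a)^q = e^{iπ/3}`, `(-b)^q = e^{-iπ/3}`, whose sum is `2 cos (π/3) = 1`.
-/

lemma IsPrimitiveRoot.prod_range_one_add_mul_pow {R : Type*} [CommRing R] [IsDomain R]
    {ζ : R} {n : ℕ} (hζ : IsPrimitiveRoot ζ n) (hn : 0 < n) (a : R) :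
    ∏ k ∈ Finset.range n, (1 + a * ζ ^ k) = 1 - (-a) ^ n := by
  have h := congrArg (Polynomial.eval 1) (X_pow_sub_C_eq_prod hζ hn (rfl : (-a) ^ n = _))
  simp only [Polynomial.eval_sub, Polynomial.eval_pow, Polynomial.eval_X, Polynomial.eval_C,
    Polynomial.eval_prod, one_pow] at h
  rw [h]
  exact Finset.prod_congr rfl fun k _ => by ring

lemma isPrimitiveRoot_exp_two_pi_int_div {p : ℤ} {q : ℕ} (hq : 0 < q)
    (hpq : Int.gcd p (q : ℤ) = 1) :
    IsPrimitiveRoot (exp (I * ((2 * Real.pi * p / q : ℝ) : ℂ))) q := by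
  have h : exp (I * ((2 * Real.pi * p / q : ℝ) : ℂ)) = exp (2 * Real.pi * I / q) ^ p := by
    rw [← exp_int_mul]
    congr 1
    push_cast
    field_simp
  rw [h]
  exact (isPrimitiveRoot_exp q hq.ne').zpow_of_gcd_eq_one p hpq

lemma Jmat_eq_diagonal_pow (p : ℤ) (q : ℕ) :
    Jmat p q = diagonal fun j : Fin q => exp (I * ((2 * Real.pi * p / q : ℝ) : ℂ)) ^ (j : ℕ) := by
  unfold Jmat
  congr 1
  funext j
  rw [← exp_nat_mul]
  ring_nf

lemma Kmat_mulVec_apply {q : ℕ} (v : ℕ → ℂ) (j : Fin q) :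
    (Kmat q *ᵥ fun i : Fin q => v i) j = v (((j : ℕ) + 1) % q) := by
  let k₀ : Fin q := ⟨((j : ℕ) + 1) % q, Nat.mod_lt _ j.pos⟩
  have hk : ∀ k : Fin q, (((j : ℕ) + 1) % q = (k : ℕ)) ↔ k₀ = k := fun k =>
    (Fin.ext_iff (a := k₀) (b := k)).symm
  simp only [Kmat, mulVec, dotProduct, of_apply, hk, ite_mul, one_mul, zero_mul,
    Finset.sum_ite_eq, Finset.mem_univ, if_true, k₀]

lemma det_diagonal_add_smul_Kmat_eq_zero {q : ℕ} (hq : 0 < q) (d : ℕ → ℂ) {b : ℂ} (hb : b ≠ 0)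
    (h : ∏ k ∈ Finset.range q, d k = (-b) ^ q) :
    det (diagonal (fun j : Fin q => d j) + b • Kmat q) = 0 := by
  obtain ⟨v, hv⟩ : ∃ v : ℕ → ℂ, ∀ n, v n = ∏ k ∈ Finset.range n, d k / (-b) :=
    ⟨_, fun _ => rfl⟩
  have hv_zero : v 0 = 1 := by rw [hv, Finset.prod_range_zero]
  have hv_period : v q = 1 := by
    rw [hv, Finset.prod_div_distrib, Finset.prod_const, Finset.card_range, h,
      div_self (pow_ne_zero _ (neg_ne_zero.mpr hb))]
  have hv_succ : ∀ n, d n * v n + b * v (n + 1) = 0 := fun n => by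
    rw [hv, hv, Finset.prod_range_succ]
    field_simp
    ring
  have hv_mod : ∀ j < q, v ((j + 1) % q) = v (j + 1) := fun j hj => by
    obtain hlt | heq : j + 1 < q ∨ j + 1 = q := by omega
    · rw [Nat.mod_eq_of_lt hlt]
    · rw [heq, Nat.mod_self, hv_zero, hv_period]
  rw [← exists_mulVec_eq_zero_iff]
  refine ⟨fun i : Fin q => v i, fun h0 => ?_, ?_⟩
  · simpa [hv_zero] using congrFun h0 ⟨0, hq⟩
  · funext j
    rw [add_mulVec, smul_mulVec, Pi.add_apply, mulVec_diagonal, Pi.smul_apply,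
      Kmat_mulVec_apply, hv_mod j j.isLt, smul_eq_mul, Pi.zero_apply]
    exact hv_succ j

lemma neg_exp_I_mul_pi_add (t : ℝ) : -exp (I * ((Real.pi + t : ℝ) : ℂ)) = exp (t * I) := by
  rw [ofReal_add, mul_add, exp_add, mul_comm I, exp_pi_mul_I, mul_comm I]
  ring

lemma neg_exp_pow_add_neg_exp_pow_eq_one {q : ℕ} (hq : 0 < q) :
    (-exp (I * ((Real.pi + Real.pi / (3 * q) : ℝ) : ℂ))) ^ q
      + (-exp (I * ((Real.pi - Real.pi / (3 * q) : ℝ) : ℂ))) ^ q = 1 := by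
  have hq0 : (q : ℂ) ≠ 0 := Nat.cast_ne_zero.mpr hq.ne'
  have hpow (t : ℝ) : exp ((t / (3 * q) : ℝ) * I) ^ q = exp ((t / 3 : ℝ) * I) := by
    rw [← exp_nat_mul]
    congr 1
    push_cast
    field_simp
  rw [sub_eq_add_neg, neg_exp_I_mul_pi_add, neg_exp_I_mul_pi_add, ← neg_div, hpow, hpow,
    neg_div, ofReal_neg, ← two_cos, ← ofReal_cos, Real.cos_pi_div_three]
  norm_num

theorem stmt_7 (p : ℤ) (q : ℕ) (hq : 0 < q) (hpq : Int.gcd p (q : ℤ) = 1) :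
    (∃ θ₁ θ₂ : ℝ,
      Matrix.det ((1 : Matrix (Fin q) (Fin q) ℂ)
          + Complex.exp (Complex.I * (θ₁ : ℂ)) • Jmat p q
          + Complex.exp (Complex.I * (θ₂ : ℂ)) • Kmat q) = 0) ∧
    Matrix.det ((1 : Matrix (Fin q) (Fin q) ℂ)
        + Complex.exp (Complex.I * ((Real.pi + Real.pi / (3 * q) : ℝ) : ℂ)) • Jmat p q
        + Complex.exp (Complex.I * ((Real.pi - Real.pi / (3 * q) : ℝ) : ℂ)) • Kmat q) = 0 := by
  set a := exp (I * ((Real.pi + Real.pi / (3 * q) : ℝ) : ℂ))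
  set b := exp (I * ((Real.pi - Real.pi / (3 * q) : ℝ) : ℂ))
  set ω := exp (I * ((2 * Real.pi * p / q : ℝ) : ℂ))
  have hdet : det ((1 : Matrix (Fin q) (Fin q) ℂ) + a • Jmat p q + b • Kmat q) = 0 := by
    rw [Jmat_eq_diagonal_pow, ← diagonal_one, ← diagonal_smul, diagonal_add]
    refine det_diagonal_add_smul_Kmat_eq_zero hq (fun k => 1 + a * ω ^ k) (exp_ne_zero _) ?_
    rw [(isPrimitiveRoot_exp_two_pi_int_div hq hpq).prod_range_one_add_mul_pow hq,
      ← neg_exp_pow_add_neg_exp_pow_eq_one hq]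
    ring
  exact ⟨⟨_, _, hdet⟩, hdet⟩
end
end

section
/- Let p ∈ ℤ and q ∈ ℕ* be relatively prime, γ = 2πp/q, ω ∈ ℝ, and P_K(θ₁,θ₂,ω,λ) the characteristic polynomial of the 3q×3q kagome matrix M_K(θ₁,θ₂,ω). Then the function (θ₁,θ₂) ↦ P_K(θ₁ + pπ, θ₂ + pπ, ω, λ) is invariant under the symmetry s(θ₁,θ₂) = (θ₂,θ₁), i.e. P_K(θ₂ + pπ, θ₁ + pπ, ω, λ) = P_K(θ₁ + pπ, θ₂ + pπ, ω, λ) for all (θ₁,θ₂) ∈ ℝ² and λ ∈ ℂ. -/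
/-!
Let `V` be the discrete Fourier matrix `V_{jk} = e^{ijkγ}`; since `gcd(p,q) = 1` it is `√q` times a
unitary matrix. Conjugation by `V` turns the cyclic shift `K` into the phase matrix `J` and `J` into
`K*`: `K V = V J`, `J V = V K*`, `K* V = V J*`, `J* V = V K`. Hence `X ↦ (V⁻¹ X V)ᵀ` exchanges `J`
and `K` (and `J*` and `K*`), which maps `A(θ₁,θ₂)`, `B(θ₁,θ₂)`, `C(θ₁,θ₂)` to `C(θ₂,θ₁)`,
`B(θ₂,θ₁)`, `A(θ₂,θ₁)`. Together with the exchange of the first and third blocks this gives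
`M_K(θ₁,θ₂) U = U M_K(θ₂,θ₁)ᵀ` for the invertible `U = P ⊗ V`, so the two matrices have the same
characteristic polynomial for all `θ₁, θ₂`.
-/

noncomputable section

open Matrix Complex

/-- Block `A(θ₁,θ₂,ω) = e^{i(ω+γ/8)}(e^{-iθ₁}J* + e^{-iγ/2}e^{-i(θ₁-θ₂)}J*K)`. -/
def AK (p : ℤ) (q : ℕ) (θ₁ θ₂ ω : ℝ) : Matrix (Fin q) (Fin q) ℂ :=
  Complex.exp (Complex.I * ((ω + 2 * Real.pi * (p : ℝ) / (q : ℝ) / 8 : ℝ) : ℂ)) •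
    (Complex.exp (-(Complex.I) * (θ₁ : ℂ)) • (Jmat p q)ᴴ
      + (Complex.exp (-(Complex.I) * ((2 * Real.pi * (p : ℝ) / (q : ℝ) / 2 : ℝ) : ℂ)) *
          Complex.exp (-(Complex.I) * ((θ₁ - θ₂ : ℝ) : ℂ))) • ((Jmat p q)ᴴ * Kmat q))

/-- Block `B(θ₁,θ₂,ω) = e^{-i(ω+γ/8)}(e^{-iθ₁}J* + e^{-iθ₂}K*)`. -/
def BK (p : ℤ) (q : ℕ) (θ₁ θ₂ ω : ℝ) : Matrix (Fin q) (Fin q) ℂ :=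
  Complex.exp (-(Complex.I) * ((ω + 2 * Real.pi * (p : ℝ) / (q : ℝ) / 8 : ℝ) : ℂ)) •
    (Complex.exp (-(Complex.I) * (θ₁ : ℂ)) • (Jmat p q)ᴴ
      + Complex.exp (-(Complex.I) * (θ₂ : ℂ)) • (Kmat q)ᴴ)

/-- Block `C(θ₁,θ₂,ω) = e^{i(ω+γ/8)}(e^{-iγ/2}e^{i(θ₁-θ₂)}JK* + e^{-iθ₂}K*)`. -/
def CK (p : ℤ) (q : ℕ) (θ₁ θ₂ ω : ℝ) : Matrix (Fin q) (Fin q) ℂ :=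
  Complex.exp (Complex.I * ((ω + 2 * Real.pi * (p : ℝ) / (q : ℝ) / 8 : ℝ) : ℂ)) •
    ((Complex.exp (-(Complex.I) * ((2 * Real.pi * (p : ℝ) / (q : ℝ) / 2 : ℝ) : ℂ)) *
        Complex.exp (Complex.I * ((θ₁ - θ₂ : ℝ) : ℂ))) • (Jmat p q * (Kmat q)ᴴ)
      + Complex.exp (-(Complex.I) * (θ₂ : ℂ)) • (Kmat q)ᴴ)

/-- The Hou (kagome) matrix : the `3q × 3q` block matrix `[[0,A,B],[A*,0,C],[B*,C*,0]]`,
indexed by `Fin 3 × Fin q` (first component = block index). -/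
def MK (p : ℤ) (q : ℕ) (θ₁ θ₂ ω : ℝ) : Matrix (Fin 3 × Fin q) (Fin 3 × Fin q) ℂ :=
  Matrix.of fun x y =>
    (![![0, AK p q θ₁ θ₂ ω, BK p q θ₁ θ₂ ω],
       ![(AK p q θ₁ θ₂ ω)ᴴ, 0, CK p q θ₁ θ₂ ω],
       ![(BK p q θ₁ θ₂ ω)ᴴ, (CK p q θ₁ θ₂ ω)ᴴ, 0]] x.1 y.1) x.2 y.2

/-- The characteristic polynomial `P_K(θ₁,θ₂,ω,λ) = det(M_K(θ₁,θ₂,ω) - λ I_{3q})`. -/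
def PK (p : ℤ) (q : ℕ) (θ₁ θ₂ ω : ℝ) (l : ℂ) : ℂ :=
  Matrix.det (MK p q θ₁ θ₂ ω - l • (1 : Matrix (Fin 3 × Fin q) (Fin 3 × Fin q) ℂ))

open scoped Kronecker

theorem ZMod.finEquiv_apply {q : ℕ} [NeZero q] (j : Fin q) :
    ZMod.finEquiv q j = ((j : ℕ) : ZMod q) := by
  obtain ⟨n, rfl⟩ := Nat.exists_eq_succ_of_ne_zero (NeZero.ne q)
  exact (Fin.cast_val_eq_self j).symm

theorem Matrix.kronecker_eq_comp {l m n o R : Type*} [Mul R] (P : Matrix l m R)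
    (V : Matrix n o R) : P ⊗ₖ V = comp l m n o R (of fun i j => P i j • V) :=
  rfl

section General

variable {n : Type*} [Fintype n] [DecidableEq n]

theorem Matrix.conjTranspose_mul_eq_mul_conjTranspose {𝕜 : Type*} [Field 𝕜] [StarRing 𝕜]
    {V X Y : Matrix n n 𝕜} {c : 𝕜} (hc : c ≠ 0) (hV : V * Vᴴ = c • 1) (h : X * V = V * Y) :
    Xᴴ * V = V * Yᴴ := by
  have hV' : Vᴴ * V = c • 1 := by
    have hinv : (c⁻¹ • Vᴴ) * V = 1 := mul_eq_one_comm.mp <| by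
      rw [Matrix.mul_smul, hV, smul_smul, inv_mul_cancel₀ hc, one_smul]
    rwa [Matrix.smul_mul, inv_smul_eq_iff₀ hc] at hinv
  have key : Vᴴ * (Xᴴ * V) = Vᴴ * (V * Yᴴ) :=
    calc Vᴴ * (Xᴴ * V) = (X * V)ᴴ * V := by rw [conjTranspose_mul, Matrix.mul_assoc]
      _ = Yᴴ * (Vᴴ * V) := by rw [h, conjTranspose_mul, Matrix.mul_assoc]
      _ = Vᴴ * (V * Yᴴ) := by
        rw [hV', ← Matrix.mul_assoc, hV', Matrix.mul_smul, Matrix.smul_mul, Matrix.mul_one,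
          Matrix.one_mul]
  simpa only [← Matrix.mul_assoc, hV, Matrix.smul_mul, Matrix.one_mul, smul_right_inj hc] using
    congrArg (V * ·) key

theorem Matrix.det_sub_smul_one_eq_of_mul_eq_mul_transpose {R : Type*} [CommRing R]
    {M N U : Matrix n n R} (hU : IsUnit U.det) (h : M * U = U * Nᵀ) (l : R) :
    (M - l • 1).det = (N - l • 1).det := by
  have hsub : (M - l • 1) * U = U * (N - l • 1)ᵀ := by
    rw [transpose_sub, transpose_smul, transpose_one, Matrix.sub_mul, Matrix.mul_sub, h,
      Matrix.smul_mul, Matrix.mul_smul, Matrix.one_mul, Matrix.mul_one]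
  have hdet := congrArg det hsub
  rw [det_mul, det_mul, det_transpose, mul_comm U.det] at hdet
  exact hU.mul_right_cancel hdet

end General

namespace Kagome

lemma exp_neg_I_mul_sub (x y : ℝ) :
    cexp (-I * ((x - y : ℝ) : ℂ)) = cexp (I * ((y - x : ℝ) : ℂ)) := by
  congr 1
  push_cast
  ring

section DFT

variable {q : ℕ} [NeZero q]

lemma Kmat_apply (j k : Fin q) : Kmat q j k = if j + 1 = k then 1 else 0 := by
  simp only [Kmat, of_apply, Fin.ext_iff, Fin.val_add, Fin.val_one', Nat.add_mod_mod]

lemma Kmat_conjTranspose : (Kmat q)ᴴ = (Kmat q)ᵀ := by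
  ext j k
  simp [Kmat_apply, apply_ite]

lemma Kmat_mul_apply (X : Matrix (Fin q) (Fin q) ℂ) (j k : Fin q) :
    (Kmat q * X) j k = X (j + 1) k := by
  simp [mul_apply, Kmat_apply]

lemma Kmat_transpose_mul_apply (X : Matrix (Fin q) (Fin q) ℂ) (j k : Fin q) :
    ((Kmat q)ᵀ * X) j k = X (j - 1) k := by
  simp [mul_apply, Kmat_apply, ← eq_sub_iff_add_eq]

variable (ψ : AddChar (ZMod q) ℂ)

lemma star_addChar_apply (x : ZMod q) : star (ψ x) = ψ⁻¹ x :=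
  AddChar.starComp_apply (by simp [ZMod.ringChar_zmod_n, Nat.pos_of_neZero]) x

def dftMatrix : Matrix (Fin q) (Fin q) ℂ :=
  of fun j k => ψ (ZMod.finEquiv q j * ZMod.finEquiv q k)

def charDiagonal : Matrix (Fin q) (Fin q) ℂ :=
  diagonal fun j => ψ (ZMod.finEquiv q j)

lemma dftMatrix_transpose : (dftMatrix ψ)ᵀ = dftMatrix ψ := by
  ext j k
  simp [dftMatrix, mul_comm]

lemma charDiagonal_transpose : (charDiagonal ψ)ᵀ = charDiagonal ψ :=
  diagonal_transpose _

lemma charDiagonal_conjTranspose : (charDiagonal ψ)ᴴ = charDiagonal ψ⁻¹ := by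
  simp only [charDiagonal, diagonal_conjTranspose, Pi.star_def, star_addChar_apply]

lemma Kmat_mul_dftMatrix : Kmat q * dftMatrix ψ = dftMatrix ψ * charDiagonal ψ := by
  ext j k
  simp [Kmat_mul_apply, dftMatrix, charDiagonal, add_mul, AddChar.map_add_eq_mul]

lemma Kmat_transpose_mul_dftMatrix :
    (Kmat q)ᵀ * dftMatrix ψ = dftMatrix ψ * charDiagonal ψ⁻¹ := by
  ext j k
  simp only [Kmat_transpose_mul_apply, dftMatrix, charDiagonal, mul_diagonal, of_apply, map_sub,
    map_one, AddChar.inv_apply]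
  rw [sub_mul, one_mul, sub_eq_add_neg, AddChar.map_add_eq_mul]

lemma charDiagonal_mul_dftMatrix : charDiagonal ψ * dftMatrix ψ = dftMatrix ψ * (Kmat q)ᵀ := by
  simpa [transpose_mul, dftMatrix_transpose, charDiagonal_transpose] using
    congrArg transpose (Kmat_mul_dftMatrix ψ).symm

lemma charDiagonal_inv_mul_dftMatrix : charDiagonal ψ⁻¹ * dftMatrix ψ = dftMatrix ψ * Kmat q := by
  simpa [transpose_mul, dftMatrix_transpose, charDiagonal_transpose] using
    congrArg transpose (Kmat_transpose_mul_dftMatrix ψ).symm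

lemma charDiagonal_inv_mul_Kmat_mul_dftMatrix :
    charDiagonal ψ⁻¹ * Kmat q * dftMatrix ψ = dftMatrix ψ * (Kmat q * charDiagonal ψ) := by
  rw [Matrix.mul_assoc, Kmat_mul_dftMatrix, ← Matrix.mul_assoc, charDiagonal_inv_mul_dftMatrix,
    Matrix.mul_assoc]

lemma charDiagonal_mul_Kmat_transpose_mul_dftMatrix :
    charDiagonal ψ * (Kmat q)ᵀ * dftMatrix ψ = dftMatrix ψ * ((Kmat q)ᵀ * charDiagonal ψ⁻¹) := by
  rw [Matrix.mul_assoc, Kmat_transpose_mul_dftMatrix, ← Matrix.mul_assoc,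
    charDiagonal_mul_dftMatrix, Matrix.mul_assoc]

lemma dftMatrix_mul_conjTranspose (hψ : ψ.IsPrimitive) :
    dftMatrix ψ * (dftMatrix ψ)ᴴ = (q : ℂ) • 1 := by
  ext j k
  have hsum : ∑ m : Fin q, ψ (ZMod.finEquiv q j * ZMod.finEquiv q m) *
      ψ⁻¹ (ZMod.finEquiv q k * ZMod.finEquiv q m) =
      ∑ x : ZMod q, ψ (x * (ZMod.finEquiv q j - ZMod.finEquiv q k)) :=
    Fintype.sum_equiv (ZMod.finEquiv q).toEquiv _ _ fun m => by
      rw [AddChar.inv_apply, ← AddChar.map_add_eq_mul]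
      exact congrArg ψ (by simp only [RingEquiv.toEquiv_eq_coe, EquivLike.coe_coe]; ring)
  simp only [mul_apply, dftMatrix, conjTranspose_apply, of_apply, star_addChar_apply, hsum,
    AddChar.sum_mulShift _ hψ, sub_eq_zero, (ZMod.finEquiv q).injective.eq_iff, ZMod.card,
    Matrix.smul_apply, one_apply]
  split_ifs <;> simp

lemma isUnit_det_dftMatrix (hψ : ψ.IsPrimitive) : IsUnit (dftMatrix ψ).det := by
  refine isUnit_det_of_right_inverse (B := (q : ℂ)⁻¹ • (dftMatrix ψ)ᴴ) ?_
  rw [Matrix.mul_smul, dftMatrix_mul_conjTranspose ψ hψ, smul_smul,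
    inv_mul_cancel₀ (Nat.cast_ne_zero.mpr (NeZero.ne q)), one_smul]

end DFT

section Blocks

variable (p : ℤ) (q : ℕ) [NeZero q]

/-- `x ↦ e^{ixγ}`, `γ = 2πp/q`. -/
def kagomeChar : AddChar (ZMod q) ℂ := ZMod.stdAddChar.mulShift (p : ZMod q)

lemma Jmat_eq_charDiagonal : Jmat p q = charDiagonal (kagomeChar p q) := by
  refine congrArg diagonal (funext fun j => ?_)
  have hq : (q : ℂ) ≠ 0 := Nat.cast_ne_zero.mpr (NeZero.ne q)
  rw [kagomeChar, AddChar.mulShift_apply, ZMod.finEquiv_apply,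
    show (p : ZMod q) * ((j : ℕ) : ZMod q) = ((p * (j : ℕ) : ℤ) : ZMod q) by push_cast; rfl,
    ZMod.stdAddChar_coe]
  congr 1
  push_cast
  field_simp

lemma isPrimitive_kagomeChar (hpq : Int.gcd p q = 1) : (kagomeChar p q).IsPrimitive := by
  have hp : IsUnit (p : ZMod q) := by
    have h := (Int.isCoprime_iff_gcd_eq_one.mpr hpq).map (Int.castRingHom (ZMod q))
    rwa [eq_intCast, map_natCast, ZMod.natCast_self, isCoprime_zero_right] at h
  intro x hx
  rw [kagomeChar, AddChar.mulShift_mulShift]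
  exact ZMod.isPrimitive_stdAddChar q (hp.mul_right_eq_zero.not.mpr hx)

variable (a b w : ℝ)

lemma BK_mul_dftMatrix :
    BK p q a b w * dftMatrix (kagomeChar p q) = dftMatrix (kagomeChar p q) * (BK p q b a w)ᵀ := by
  simp only [BK, Jmat_eq_charDiagonal, charDiagonal_conjTranspose, Kmat_conjTranspose,
    transpose_smul, transpose_add, transpose_transpose, charDiagonal_transpose,
    Matrix.smul_mul, Matrix.add_mul, Kmat_transpose_mul_dftMatrix,
    charDiagonal_inv_mul_dftMatrix, Matrix.mul_smul, Matrix.mul_add]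
  module

lemma AK_mul_dftMatrix :
    AK p q a b w * dftMatrix (kagomeChar p q) = dftMatrix (kagomeChar p q) * (CK p q b a w)ᵀ := by
  simp only [AK, CK, Jmat_eq_charDiagonal, charDiagonal_conjTranspose, Kmat_conjTranspose,
    transpose_smul, transpose_add, transpose_mul, transpose_transpose, charDiagonal_transpose,
    Matrix.smul_mul, Matrix.add_mul, charDiagonal_inv_mul_Kmat_mul_dftMatrix,
    charDiagonal_inv_mul_dftMatrix, Matrix.mul_smul, Matrix.mul_add, exp_neg_I_mul_sub]
  module

lemma CK_mul_dftMatrix :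
    CK p q a b w * dftMatrix (kagomeChar p q) = dftMatrix (kagomeChar p q) * (AK p q b a w)ᵀ := by
  simp only [AK, CK, Jmat_eq_charDiagonal, charDiagonal_conjTranspose, Kmat_conjTranspose,
    transpose_smul, transpose_add, transpose_mul, charDiagonal_transpose,
    Matrix.smul_mul, Matrix.add_mul, charDiagonal_mul_Kmat_transpose_mul_dftMatrix,
    Kmat_transpose_mul_dftMatrix, Matrix.mul_smul, Matrix.mul_add, exp_neg_I_mul_sub]
  module

end Blocks

lemma MK_eq_comp (p : ℤ) (q : ℕ) (a b w : ℝ) :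
    MK p q a b w = comp _ _ _ _ ℂ !![0, AK p q a b w, BK p q a b w;
      (AK p q a b w)ᴴ, 0, CK p q a b w; (BK p q a b w)ᴴ, (CK p q a b w)ᴴ, 0] :=
  rfl

def swapBlocks : Matrix (Fin 3) (Fin 3) ℂ := !![0, 0, 1; 0, 1, 0; 1, 0, 0]

lemma isUnit_det_swapBlocks : IsUnit swapBlocks.det := by
  simp [swapBlocks, det_fin_three]

variable (p : ℤ) (q : ℕ) [NeZero q]

lemma MK_mul_kronecker (hpq : Int.gcd p q = 1) (a b w : ℝ) :
    MK p q a b w * (swapBlocks ⊗ₖ dftMatrix (kagomeChar p q)) =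
      (swapBlocks ⊗ₖ dftMatrix (kagomeChar p q)) * (MK p q b a w)ᵀ := by
  have hV := dftMatrix_mul_conjTranspose _ (isPrimitive_kagomeChar p q hpq)
  have hq : (q : ℂ) ≠ 0 := Nat.cast_ne_zero.mpr (NeZero.ne q)
  have hA := conjTranspose_mul_eq_mul_conjTranspose hq hV (AK_mul_dftMatrix p q a b w)
  have hB := conjTranspose_mul_eq_mul_conjTranspose hq hV (BK_mul_dftMatrix p q a b w)
  have hC := conjTranspose_mul_eq_mul_conjTranspose hq hV (CK_mul_dftMatrix p q a b w)
  rw [MK_eq_comp, MK_eq_comp, kronecker_eq_comp, transpose_comp]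
  simp only [← compRingEquiv_apply, ← map_mul]
  congr 1
  -- block `(i, j)` reads `M_{i,σj} V = V (M'_{j,σi})ᵀ`, `σ = (0 2)`: the six nonzero ones are
  -- the three `*_mul_dftMatrix` lemmas and their conjugate transposes
  ext i j : 1
  fin_cases i <;> fin_cases j <;>
    simp [mul_apply, Fin.sum_univ_three, swapBlocks, AK_mul_dftMatrix, BK_mul_dftMatrix,
      CK_mul_dftMatrix, hA, hB, hC, conjTranspose_transpose_eq_transpose_conjTranspose]

lemma PK_swap (hpq : Int.gcd p q = 1) (a b w : ℝ) (l : ℂ) : PK p q a b w l = PK p q b a w l := by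
  have hU : IsUnit (swapBlocks ⊗ₖ dftMatrix (kagomeChar p q)).det := by
    rw [det_kronecker]
    exact (isUnit_det_swapBlocks.pow _).mul
      ((isUnit_det_dftMatrix _ (isPrimitive_kagomeChar p q hpq)).pow _)
  exact det_sub_smul_one_eq_of_mul_eq_mul_transpose hU (MK_mul_kronecker p q hpq a b w) l

end Kagome

theorem stmt_12 (p : ℤ) (q : ℕ) (hq : 0 < q) (hpq : Int.gcd p (q : ℤ) = 1)
    (ω θ₁ θ₂ : ℝ) (l : ℂ) :
    PK p q (θ₂ + p * Real.pi) (θ₁ + p * Real.pi) ω l =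
      PK p q (θ₁ + p * Real.pi) (θ₂ + p * Real.pi) ω l := by
  have : NeZero q := ⟨hq.ne'⟩
  exact Kagome.PK_swap p q hpq _ _ ω l
end
end

section
/- (Flat band criterion) Let p ∈ ℤ and q ∈ ℕ* be relatively prime, γ = 2πp/q, ω ∈ ℝ, and let Q_ω be the real polynomial of degree 3q from the kagome Chambers formula P_K(θ₁,θ₂,ω,λ) = Q_ω(λ) + 2 p^△(q(θ₁+pπ), q(θ₂+pπ))(λ + 2cos(3ω - γ/8))^q. Then there exists a real number λ that is an eigenvalue of M_K(θ₁,θ₂,ω) for every (θ₁,θ₂) ∈ ℝ² (a flat band) if and only if Q_ω(-2cos(3ω - γ/8)) = 0; in that case the flat band value is λ = -2cos(3ω - γ/8). -/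
noncomputable section

open Matrix Complex

/-- `p^△(x,ξ) = cos x + cos ξ + cos(x-ξ)`. -/
def ptri (x ξ : ℝ) : ℝ := Real.cos x + Real.cos ξ + Real.cos (x - ξ)

/-!
Evaluate the Chambers formula at two quasi-momenta where `p^△` takes the values `3` and `-1`:
the difference forces `(λ + 2cos(3ω - γ/8))^q = 0`, so a flat band can only sit at
`λ = -2cos(3ω - γ/8)`, and there `P_K` reduces to `Q_ω(λ)`.
-/

theorem ptri_zero_zero : ptri 0 0 = 3 := by
  norm_num [ptri]

theorem ptri_pi_zero : ptri Real.pi 0 = -1 := by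
  simp [ptri]

theorem forall_add_mul_eq_zero_iff {ι K : Type*} [Field K] {g : ι → K} (hg : ∃ i j, g i ≠ g j)
    {a b : K} : (∀ i, a + g i * b = 0) ↔ a = 0 ∧ b = 0 := by
  obtain ⟨i, j, hij⟩ := hg
  refine ⟨fun h => ?_, fun ⟨ha, hb⟩ _ => by simp [ha, hb]⟩
  have hb : b = 0 := by
    have hdiff : (g i - g j) * b = 0 := by linear_combination h i - h j
    exact (mul_eq_zero.mp hdiff).resolve_left (sub_ne_zero.mpr hij)
  refine ⟨?_, hb⟩
  simpa [hb] using h i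

theorem exists_ptri_ne (p : ℤ) {q : ℕ} (hq : q ≠ 0) :
    ∃ θ θ' : ℝ × ℝ,
      ptri (q * (θ.1 + p * Real.pi)) (q * (θ.2 + p * Real.pi)) ≠
        ptri (q * (θ'.1 + p * Real.pi)) (q * (θ'.2 + p * Real.pi)) := by
  refine ⟨(-p * Real.pi, -p * Real.pi), (-p * Real.pi + Real.pi / q, -p * Real.pi), ?_⟩
  have hq' : (q : ℝ) ≠ 0 := Nat.cast_ne_zero.mpr hq
  have h0 : (q : ℝ) * (-p * Real.pi + p * Real.pi) = 0 := by ring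
  have hπ : (q : ℝ) * (-p * Real.pi + Real.pi / q + p * Real.pi) = Real.pi := by
    field_simp; ring
  dsimp only
  rw [h0, hπ, ptri_zero_zero, ptri_pi_zero]
  norm_num

theorem forall_eq_zero_iff_of_chambers {ι : Type*} {F : ι → ℂ → ℂ} {g : ι → ℝ} {Q : Polynomial ℝ}
    {c : ℝ} {q : ℕ} (hg : ∃ i j, g i ≠ g j) (hq : q ≠ 0)
    (hF : ∀ i l, F i l = Polynomial.aeval l Q + 2 * (g i : ℂ) * (l + c) ^ q) (l : ℝ) :
    (∀ i, F i l = 0) ↔ l = -c ∧ Q.eval l = 0 := by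
  have hg' : ∃ i j, (2 * (g i : ℂ)) ≠ 2 * (g j : ℂ) := by
    obtain ⟨i, j, hij⟩ := hg
    exact ⟨i, j, by simpa using hij⟩
  have haeval : Polynomial.aeval (l : ℂ) Q = ((Q.eval l : ℝ) : ℂ) :=
    (Polynomial.ofReal_eval Q l).symm
  simp only [hF]
  rw [forall_add_mul_eq_zero_iff hg', haeval, pow_eq_zero_iff hq,
    ← ofReal_add, ofReal_eq_zero, ofReal_eq_zero, add_eq_zero_iff_eq_neg, and_comm]

theorem stmt_14_general (p : ℤ) (q : ℕ) (hq : 0 < q) (ω : ℝ)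
    (Q : Polynomial ℝ)
    (hQ : ∀ (θ₁ θ₂ : ℝ) (l : ℂ),
      PK p q θ₁ θ₂ ω l =
        Polynomial.aeval l Q
          + 2 * ((ptri ((q : ℝ) * (θ₁ + p * Real.pi)) ((q : ℝ) * (θ₂ + p * Real.pi)) : ℝ) : ℂ)
            * (l + ((2 * Real.cos (3 * ω - 2 * Real.pi * (p : ℝ) / (q : ℝ) / 8) : ℝ) : ℂ)) ^ q) :
    ((∃ l : ℝ, ∀ θ₁ θ₂ : ℝ, PK p q θ₁ θ₂ ω (l : ℂ) = 0) ↔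
        Polynomial.eval (-(2 * Real.cos (3 * ω - 2 * Real.pi * (p : ℝ) / (q : ℝ) / 8))) Q = 0) ∧
    ∀ l : ℝ, (∀ θ₁ θ₂ : ℝ, PK p q θ₁ θ₂ ω (l : ℂ) = 0) →
      l = -(2 * Real.cos (3 * ω - 2 * Real.pi * (p : ℝ) / (q : ℝ) / 8)) := by
  have flat (l : ℝ) := forall_eq_zero_iff_of_chambers (F := fun θ : ℝ × ℝ => PK p q θ.1 θ.2 ω)
    (exists_ptri_ne p hq.ne') hq.ne' (fun θ => hQ θ.1 θ.2) l
  simp only [Prod.forall] at flat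
  simp only [flat]
  exact ⟨⟨fun ⟨l, hl, hQl⟩ => hl ▸ hQl, fun hQc => ⟨_, rfl, hQc⟩⟩, fun l h => h.1⟩

theorem stmt_14 (p : ℤ) (q : ℕ) (hq : 0 < q) (hpq : Int.gcd p (q : ℤ) = 1) (ω : ℝ)
    (Q : Polynomial ℝ)
    (hQ : ∀ (θ₁ θ₂ : ℝ) (l : ℂ),
      PK p q θ₁ θ₂ ω l =
        Polynomial.aeval l Q
          + 2 * ((ptri ((q : ℝ) * (θ₁ + p * Real.pi)) ((q : ℝ) * (θ₂ + p * Real.pi)) : ℝ) : ℂ)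
            * (l + ((2 * Real.cos (3 * ω - 2 * Real.pi * (p : ℝ) / (q : ℝ) / 8) : ℝ) : ℂ)) ^ q) :
    ((∃ l : ℝ, ∀ θ₁ θ₂ : ℝ, PK p q θ₁ θ₂ ω (l : ℂ) = 0) ↔
        Polynomial.eval (-(2 * Real.cos (3 * ω - 2 * Real.pi * (p : ℝ) / (q : ℝ) / 8))) Q = 0) ∧
    ∀ l : ℝ, (∀ θ₁ θ₂ : ℝ, PK p q θ₁ θ₂ ω (l : ℂ) = 0) →
      l = -(2 * Real.cos (3 * ω - 2 * Real.pi * (p : ℝ) / (q : ℝ) / 8)) :=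
  stmt_14_general p q hq ω Q hQ
end
end

section
/- For q = 1, p = 0 (so γ = 0) and ω ∈ ℝ, the 3×3 kagome matrix M_K(θ₁,θ₂,ω) has an eigenvalue independent of (θ₁,θ₂) (a flat band) if and only if ω = kπ/6 for some k ∈ ℤ. Equivalently, the polynomial Q_ω(λ) = λ³ - 6λ - 4cos(3ω) satisfies Q_ω(-2cos(3ω)) = 0 if and only if cos(3ω) ∈ {0, 1, -1}. -/
noncomputable section

open Matrix Complex

/-- The `3 × 3` kagome matrix for `q = 1`, `p = 0` (so `γ = 0`). -/
def MK1 (θ₁ θ₂ ω : ℝ) : Matrix (Fin 3) (Fin 3) ℂ :=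
  let A : ℂ := Complex.exp (Complex.I * (ω : ℂ)) *
    (Complex.exp (-(Complex.I) * (θ₁ : ℂ)) + Complex.exp (-(Complex.I) * ((θ₁ - θ₂ : ℝ) : ℂ)))
  let B : ℂ := Complex.exp (-(Complex.I) * (ω : ℂ)) *
    (Complex.exp (-(Complex.I) * (θ₁ : ℂ)) + Complex.exp (-(Complex.I) * (θ₂ : ℂ)))
  let C : ℂ := Complex.exp (Complex.I * (ω : ℂ)) *
    (Complex.exp (Complex.I * ((θ₁ - θ₂ : ℝ) : ℂ)) + Complex.exp (-(Complex.I) * (θ₂ : ℂ)))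
  !![0, A, B;
     starRingEnd ℂ A, 0, C;
     starRingEnd ℂ B, starRingEnd ℂ C, 0]

lemma conj_exp_I (x : ℝ) : (starRingEnd ℂ) (Complex.exp (Complex.I * x)) = Complex.exp (-Complex.I * x) := by
  rw [← Complex.exp_conj, _root_.map_mul, Complex.conj_I, Complex.conj_ofReal]

lemma conj_exp_negI (x : ℝ) : (starRingEnd ℂ) (Complex.exp (-Complex.I * x)) = Complex.exp (Complex.I * x) := by
  rw [← Complex.exp_conj, _root_.map_mul, _root_.map_neg, Complex.conj_I, Complex.conj_ofReal, neg_neg]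

lemma cosC (z : ℂ) : Complex.cos z = (Complex.exp (Complex.I * z) + Complex.exp (-Complex.I * z))/2 := by
  rw [show Complex.cos z = (2 * Complex.cos z)/2 by ring, Complex.two_cos]
  congr 2 <;> ring_nf

set_option maxHeartbeats 1600000 in
lemma detMK1 (θ₁ θ₂ ω l : ℝ) :
    Matrix.det (MK1 θ₁ θ₂ ω - (l : ℂ) • (1 : Matrix (Fin 3) (Fin 3) ℂ)) =
      ((-(l^3 - 6*l - 4*Real.cos (3*ω)) +
        2*(Real.cos θ₁ + Real.cos θ₂ + Real.cos (θ₁ - θ₂)) * (l + 2*Real.cos (3*ω)) : ℝ) : ℂ) := by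
  have ed : Complex.exp (-Complex.I * ((θ₁ : ℂ) - θ₂)) =
      Complex.exp (-Complex.I * (θ₁ : ℂ)) * Complex.exp (Complex.I * (θ₂ : ℂ)) := by
    rw [← Complex.exp_add]; congr 1; ring
  have ed' : Complex.exp (Complex.I * ((θ₁ : ℂ) - θ₂)) =
      Complex.exp (Complex.I * (θ₁ : ℂ)) * Complex.exp (-Complex.I * (θ₂ : ℂ)) := by
    rw [← Complex.exp_add]; congr 1; ring
  have e3 : Complex.exp (Complex.I * (3 * (ω : ℂ))) = Complex.exp (Complex.I * (ω : ℂ)) ^ 3 := by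
    rw [← Complex.exp_nat_mul]; congr 1; ring
  have e3' : Complex.exp (-Complex.I * (3 * (ω : ℂ))) = Complex.exp (-Complex.I * (ω : ℂ)) ^ 3 := by
    rw [← Complex.exp_nat_mul]; congr 1; ring
  set a := Complex.exp (Complex.I * (θ₁ : ℂ)) with ha
  set a' := Complex.exp (-Complex.I * (θ₁ : ℂ)) with ha'
  set b := Complex.exp (Complex.I * (θ₂ : ℂ)) with hb
  set b' := Complex.exp (-Complex.I * (θ₂ : ℂ)) with hb'
  set w := Complex.exp (Complex.I * (ω : ℂ)) with hw
  set w' := Complex.exp (-Complex.I * (ω : ℂ)) with hw'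
  have raa : a * a' = 1 := by
    rw [ha, ha', ← Complex.exp_add, show Complex.I * (θ₁:ℂ) + -Complex.I * θ₁ = 0 by ring,
      Complex.exp_zero]
  have rbb : b * b' = 1 := by
    rw [hb, hb', ← Complex.exp_add, show Complex.I * (θ₂:ℂ) + -Complex.I * θ₂ = 0 by ring,
      Complex.exp_zero]
  have rww : w * w' = 1 := by
    rw [hw, hw', ← Complex.exp_add, show Complex.I * (ω:ℂ) + -Complex.I * ω = 0 by ring,
      Complex.exp_zero]
  clear_value a a' b b' w w'
  set L := (l : ℂ) with hL
  simp only [MK1, Matrix.det_fin_three, Matrix.sub_apply, Matrix.smul_apply, Matrix.one_apply,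
    Matrix.of_apply, Matrix.cons_val', Matrix.cons_val_zero, Matrix.cons_val_one, Matrix.head_cons,
    Matrix.empty_val', Matrix.cons_val_fin_one, Matrix.head_fin_const, smul_eq_mul,
    Matrix.cons_val_two, Matrix.tail_cons]
  simp only [_root_.map_mul, _root_.map_add, conj_exp_I, conj_exp_negI]
  push_cast
  rw [cosC ((θ₁:ℂ)), cosC ((θ₂:ℂ)), cosC ((θ₁:ℂ) - θ₂), cosC (3 * (ω:ℂ))]
  rw [ed, ed', e3, e3', ← ha, ← hb, ← hw, ← ha', ← hb', ← hw']
  linear_combination (b'*w^3 + b*w'^3 + (2:ℂ)*b*b'*w'^3 + (2:ℂ)*b*b'*w^3 + b*b'^2*w'^3 + b^2*b'*w^3 + a'*b*w'^3 + a'*b*b'*w'^3 + a*b'*w^3 + a*b*b'*w^3 + (2:ℂ)*L*w*w' + L*b'*w*w' + L*b*w*w' + (2:ℂ)*L*b*b'*w*w') * raa + ((2:ℂ)*w'^3 + (2:ℂ)*w^3 + b'*w'^3 + b*w^3 + a'*w'^3 + a'*w^3 + a'*b*w^3 + a*w'^3 + a*w^3 + a*b'*w'^3 + (4:ℂ)*L*w*w'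 + L*a'*w*w' + L*a*w*w') * rbb + ((6:ℂ)*L + L*b' + L*b + L*a' + L*a'*b + L*a + L*a*b') * rww

lemma sc_eq_zero_iff (ω : ℝ) :
    Real.sin (3*ω) * Real.cos (3*ω) = 0 ↔ ∃ k : ℤ, ω = k * Real.pi / 6 := by
  constructor
  · intro h
    have h6 : Real.sin (6*ω) = 0 := by
      rw [show (6:ℝ)*ω = 2*(3*ω) by ring, Real.sin_two_mul]
      linear_combination 2 * h
    obtain ⟨n, hn⟩ := Real.sin_eq_zero_iff.mp h6
    exact ⟨n, by linarith⟩
  · rintro ⟨k, hk⟩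
    have h6 : Real.sin (6*ω) = 0 := Real.sin_eq_zero_iff.mpr ⟨k, by rw [hk]; ring⟩
    rw [show (6:ℝ)*ω = 2*(3*ω) by ring, Real.sin_two_mul] at h6
    linarith

theorem stmt_16 (ω : ℝ) :
    ((∃ l : ℝ, ∀ θ₁ θ₂ : ℝ,
        Matrix.det (MK1 θ₁ θ₂ ω - (l : ℂ) • (1 : Matrix (Fin 3) (Fin 3) ℂ)) = 0) ↔
      ∃ k : ℤ, ω = k * Real.pi / 6) ∧
    ((-(2 * Real.cos (3 * ω))) ^ 3 - 6 * (-(2 * Real.cos (3 * ω))) - 4 * Real.cos (3 * ω) = 0 ↔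
      Real.cos (3 * ω) = 0 ∨ Real.cos (3 * ω) = 1 ∨ Real.cos (3 * ω) = -1) := by
  set c := Real.cos (3 * ω) with hc
  set s := Real.sin (3 * ω) with hs
  have pyth : s ^ 2 + c ^ 2 = 1 := Real.sin_sq_add_cos_sq (3 * ω)
  constructor
  · rw [← sc_eq_zero_iff ω, ← hc, ← hs]
    constructor
    · rintro ⟨l, hl⟩
      have h1 := hl 0 0
      have h2 := hl Real.pi Real.pi
      rw [detMK1, Complex.ofReal_eq_zero] at h1 h2
      rw [sub_self, Real.cos_zero] at h1 h2
      rw [Real.cos_pi] at h2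
      rw [← hc] at h1 h2
      have hl2c : l + 2 * c = 0 := by nlinarith [h1, h2]
      have hcub : c ^ 3 - c = 0 := by
        linear_combination (1/8) * h1 + (1/8) * (l^2 - 2*l*c + 4*c^2 - 12) * hl2c
      have hsq : (s * c) ^ 2 = 0 := by linear_combination (-c) * hcub + c ^ 2 * pyth
      exact (pow_eq_zero_iff two_ne_zero).mp hsq
    · intro hsc
      refine ⟨-(2 * c), fun θ₁ θ₂ => ?_⟩
      rw [detMK1, Complex.ofReal_eq_zero, ← hc]
      linear_combination (8 * c) * pyth + (-8 * s) * hsc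
  · constructor
    · intro h
      have h' : c * ((c - 1) * (c + 1)) = 0 := by nlinarith [h]
      rcases mul_eq_zero.mp h' with h0 | h1
      · exact Or.inl h0
      · rcases mul_eq_zero.mp h1 with h2 | h3
        · exact Or.inr (Or.inl (by linarith))
        · exact Or.inr (Or.inr (by linarith))
    · rintro (h | h | h) <;> rw [h] <;> ring
end
end

section
/- Let f be a polynomial with real coefficients of degree q ≥ 1 and I = (a,b) a nonempty open interval such that for every μ ∈ I the equation f(λ) = μ has q real solutions counted with multiplicity (i.e. all complex roots of f - μ are real). Then f'(λ) ≠ 0 for every real λ such that f(λ) ∈ I. -/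
/-!
If `p` has only real roots then `p'/p = ∑ 1/(x - r)` over the roots, so `(p'/p)' < 0`, i.e.
`p'(x)² - p(x) p''(x) > 0` wherever `p(x) ≠ 0` (Laguerre). Rather than through this sum, positivity
is proved from the product rule `L(fg) = g² L(f) + f² L(g)` for `L(p) = p'² - p p''`, with `L = 1`
on linear factors.

If `f'(l) = 0` with `f(l) ∈ (a, b)`, apply this to `f - μ` at `l`: it gives `(μ - f(l)) f''(l) > 0`
for every `μ ∈ (a, b)` other than `f(l)`, which is impossible for `μ` on both sides of `f(l)`.
-/

open Polynomial

namespace Polynomial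

section CommRing

variable {R : Type*} [CommRing R]

noncomputable def laguerre (p : R[X]) (x : R) : R :=
  p.derivative.eval x ^ 2 - p.eval x * p.derivative.derivative.eval x

theorem laguerre_mul (f g : R[X]) (x : R) :
    laguerre (f * g) x = g.eval x ^ 2 * laguerre f x + f.eval x ^ 2 * laguerre g x := by
  simp only [laguerre, derivative_mul, derivative_add, eval_add, eval_mul]
  ring

@[simp]
theorem laguerre_C (a x : R) : laguerre (C a) x = 0 := by
  simp [laguerre]

@[simp]
theorem laguerre_X_add_C (a x : R) : laguerre (X + C a) x = 1 := by
  simp [laguerre]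

@[simp]
theorem laguerre_X_sub_C (a x : R) : laguerre (X - C a) x = 1 := by
  simp [laguerre]

end CommRing

section OrderedField

variable {R : Type*} [Field R] [LinearOrder R] [IsStrictOrderedRing R]

theorem Splits.laguerre_nonneg {p : R[X]} (hp : p.Splits) (x : R) : 0 ≤ laguerre p x := by
  induction hp using Submonoid.closure_induction with
  | mem p hp => obtain ⟨a, rfl⟩ | ⟨a, rfl⟩ := hp <;> simp
  | one => simp [laguerre]
  | mul f g _ _ hf hg =>
    rw [laguerre_mul]
    positivity

theorem Splits.laguerre_pos {p : R[X]} (hp : p.Splits) (hdeg : p.natDegree ≠ 0) {x : R}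
    (hx : p.eval x ≠ 0) : 0 < laguerre p x := by
  obtain ⟨r, hr⟩ := hp.exists_eval_eq_zero (degree_ne_of_natDegree_ne hdeg)
  set g := p /ₘ (X - C r)
  have hfac : (X - C r) * g = p := mul_divByMonic_eq_iff_isRoot.mpr hr
  have hg : g.Splits := splits_X_sub_C_mul_iff.mp (hfac ▸ hp)
  have hgx : g.eval x ≠ 0 := fun h ↦ hx (by rw [← hfac, eval_mul, h, mul_zero])
  rw [← hfac, laguerre_mul, laguerre_X_sub_C]
  have := hg.laguerre_nonneg x
  positivity

end OrderedField

theorem splits_of_forall_aeval_eq_zero_im_eq_zero {p : ℝ[X]}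
    (h : ∀ z : ℂ, aeval z p = 0 → z.im = 0) : p.Splits := by
  refine Splits.of_splits_map (algebraMap ℝ ℂ) (IsAlgClosed.splits _) fun z hz ↦ ?_
  have hz' : aeval z p = 0 := by rw [aeval_def, ← eval_map]; exact isRoot_of_mem_roots hz
  exact ⟨z.re, Complex.ext (by simp) (by simp [h z hz'])⟩

end Polynomial

theorem stmt_17_general (f : Polynomial ℝ) (q : ℕ) (hq : 1 ≤ q) (hdeg : f.natDegree = q)
    (a b : ℝ)
    (hreal : ∀ μ ∈ Set.Ioo a b, ∀ z : ℂ, Polynomial.aeval z f = (μ : ℂ) → z.im = 0) :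
    ∀ l : ℝ, f.eval l ∈ Set.Ioo a b → f.derivative.eval l ≠ 0 := by
  intro l ⟨hal, hlb⟩ hcrit
  have hsign : ∀ μ ∈ Set.Ioo a b, μ ≠ f.eval l →
      0 < (μ - f.eval l) * f.derivative.derivative.eval l := by
    intro μ hμ hne
    have hsplit : (f - C μ).Splits := splits_of_forall_aeval_eq_zero_im_eq_zero fun z hz ↦
      hreal μ hμ z (by simpa [sub_eq_zero] using hz)
    have hdeg' : (f - C μ).natDegree ≠ 0 := by rw [natDegree_sub_C, hdeg]; omega
    have hpos := hsplit.laguerre_pos hdeg' (by simpa [sub_eq_zero] using hne.symm)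
    simp only [laguerre, derivative_sub, derivative_C, sub_zero, eval_sub, eval_C, hcrit] at hpos
    linarith
  have hbelow := hsign ((a + f.eval l) / 2) ⟨by linarith, by linarith⟩ (by linarith)
  have habove := hsign ((f.eval l + b) / 2) ⟨by linarith, by linarith⟩ (by linarith)
  nlinarith

theorem stmt_17 (f : Polynomial ℝ) (q : ℕ) (hq : 1 ≤ q) (hdeg : f.natDegree = q)
    (a b : ℝ) (hab : a < b)
    (hreal : ∀ μ ∈ Set.Ioo a b, ∀ z : ℂ, Polynomial.aeval z f = (μ : ℂ) → z.im = 0) :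
    ∀ l : ℝ, f.eval l ∈ Set.Ioo a b → f.derivative.eval l ≠ 0 :=
  stmt_17_general f q hq hdeg a b hreal
end
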